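/- arXiv:2507.03404 — 4 statements merged into one kernel-verified Lean document; each statement's English description precedes it below -/
import Mathlib

section
/- For λ, μ > 0, the Hadamard product of the power series expansions of 1/((1-z)² + λ) and 1/((1-z)² + μ) equals ((λ+1)(μ+1) - z²) / (((1-z)² + λμ + λ + μ)² - 4λμz²) as a power series identity valid for |z| small enough. -/
open Filter Topology

open FormalMultilinearSeries in
private lemma myCoeffsZero {c : ℕ → ℝ} {ε : ℝ} (hε : 0 < ε)
    (h : ∀ z : ℝ, |z| < ε → HasSum (fun k => c k * z ^ k) 0) : ∀ n, c n = 0 := by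
  have hsum : Summable (fun k => c k * (ε/2) ^ k) := by
    refine (h (ε/2) ?_).summable
    rw [abs_of_pos (by positivity)]; linarith
  have htend := hsum.tendsto_atTop_zero
  obtain ⟨C, hC⟩ := (htend.abs).bddAbove_range
  have hCb : ∀ k, |c k| * (ε/2) ^ k ≤ C := by
    intro k
    have := hC (Set.mem_range_self k)
    rwa [abs_mul, abs_of_pos (by positivity : (0:ℝ) < (ε/2)^k)] at this
  have hnorm : ∀ n, ‖ofScalars ℝ c n‖ ≤ |c n| := by
    intro n
    have h2 : ‖ofScalars ℝ c n‖ = ‖c n‖ * ‖ContinuousMultilinearMap.mkPiAlgebraFin ℝ n ℝ‖ :=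
      norm_smul (c n) (ContinuousMultilinearMap.mkPiAlgebraFin ℝ n ℝ)
    rw [h2]
    have h3 : ‖ContinuousMultilinearMap.mkPiAlgebraFin ℝ n ℝ‖ ≤ 1 := by
      simpa using ContinuousMultilinearMap.norm_mkPiAlgebraFin_le (𝕜 := ℝ) (n := n) (A := ℝ)
    calc ‖c n‖ * ‖ContinuousMultilinearMap.mkPiAlgebraFin ℝ n ℝ‖ ≤ ‖c n‖ * 1 :=
          mul_le_mul_of_nonneg_left h3 (norm_nonneg _)
      _ = |c n| := by simp [Real.norm_eq_abs]
  have hrad : (ENNReal.ofReal (ε/4)) ≤ (ofScalars ℝ c).radius := by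
    have hle : ∀ n : ℕ, ‖ofScalars ℝ c n‖ * ((ε/4).toNNReal : ℝ) ^ n ≤ C := by
      intro n
      rw [Real.coe_toNNReal _ (by positivity)]
      calc ‖ofScalars ℝ c n‖ * (ε/4) ^ n ≤ |c n| * (ε/4) ^ n :=
            mul_le_mul_of_nonneg_right (hnorm n) (by positivity)
        _ ≤ |c n| * (ε/2) ^ n :=
            mul_le_mul_of_nonneg_left
              (pow_le_pow_left₀ (by positivity) (by linarith) n) (abs_nonneg _)
        _ ≤ C := hCb n
    have := (ofScalars ℝ c).le_radius_of_bound C hle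
    rwa [ENNReal.ofReal]
  have hfp : HasFPowerSeriesAt (0 : ℝ → ℝ) (ofScalars ℝ c) 0 := by
    refine ⟨ENNReal.ofReal (ε/4), hrad, by rw [ENNReal.ofReal_pos]; positivity, ?_⟩
    intro y hy
    rw [EMetric.mem_ball, edist_zero_right, ← ofReal_norm] at hy
    have hy' : |y| < ε := by
      have := (ENNReal.ofReal_lt_ofReal_iff (by positivity)).mp hy
      rw [Real.norm_eq_abs] at this; linarith
    have hfun : (fun n => (ofScalars ℝ c n) fun _ => y) = fun k => c k * y ^ k := by
      funext n; rw [ofScalars_apply_eq, smul_eq_mul]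
    rw [hfun]
    simpa using h y hy'
  have hz := hfp.eq_zero
  intro n
  have hc : c = 0 := by rwa [← ofScalars_series_eq_zero (𝕜 := ℝ) (E := ℝ)]
  simp [hc]

private lemma myShift {c : ℕ → ℝ} {z s : ℝ} (j : ℕ) (h : HasSum (fun k => c k * z ^ k) s) :
    HasSum (fun n => (if j ≤ n then c (n - j) else 0) * z ^ n) (z ^ j * s) := by
  have h1 : HasSum (fun k => (if j ≤ k + j then c (k + j - j) else 0) * z ^ (k + j))
      (z ^ j * s) := by
    have heq : (fun k => (if j ≤ k + j then c (k + j - j) else 0) * z ^ (k + j))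
        = fun k => z ^ j * (c k * z ^ k) := by
      funext k
      rw [if_pos (Nat.le_add_left _ _), Nat.add_sub_cancel, pow_add]; ring
    rw [heq]
    exact h.mul_left _
  have h2 := (hasSum_nat_add_iff
    (f := fun n => (if j ≤ n then c (n - j) else 0) * z ^ n) j).mp h1
  have hz : ∑ i ∈ Finset.range j, (if j ≤ i then c (i - j) else 0) * z ^ i = 0 :=
    Finset.sum_eq_zero fun i hi => by
      rw [if_neg (Nat.not_le.mpr (Finset.mem_range.mp hi)), zero_mul]
  rwa [hz, add_zero] at h2

private lemma myRec {lam : ℝ} (hlam : 0 < lam) {a : ℕ → ℝ} {ε : ℝ} (hε : 0 < ε)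
    (ha : ∀ z : ℝ, |z| < ε → HasSum (fun k => a k * z ^ k) (1 / ((1 - z) ^ 2 + lam))) :
    (lam + 1) * a 0 = 1 ∧ (lam + 1) * a 1 = 2 * a 0 ∧
      ∀ n, (lam + 1) * a (n + 2) = 2 * a (n + 1) - a n := by
  set e : ℕ → ℝ := fun n => (lam + 1) * a n - 2 * (if 1 ≤ n then a (n - 1) else 0)
    + (if 2 ≤ n then a (n - 2) else 0) - (if n = 0 then 1 else 0) with he
  have hez : ∀ n, e n = 0 := by
    refine myCoeffsZero hε fun z hz => ?_
    have h := ha z hz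
    have hden : (1 - z) ^ 2 + lam ≠ 0 := by positivity
    have h0 := h.mul_left (lam + 1)
    have h1 := (myShift 1 h).mul_left 2
    have h2 := myShift 2 h
    have h3 : HasSum (fun n : ℕ => (if n = 0 then (1:ℝ) else 0) * z ^ n) 1 := by
      have heq : (fun n : ℕ => (if n = 0 then (1:ℝ) else 0) * z ^ n)
          = fun n : ℕ => if n = 0 then (1:ℝ) else 0 := by
        funext n; cases n <;> simp
      rw [heq]; exact hasSum_ite_eq 0 1
    have hc := ((h0.sub h1).add h2).sub h3
    have hval : (lam + 1) * (1 / ((1 - z) ^ 2 + lam))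
        - 2 * (z ^ 1 * (1 / ((1 - z) ^ 2 + lam)))
        + z ^ 2 * (1 / ((1 - z) ^ 2 + lam)) - 1 = 0 := by
      field_simp; ring
    rw [hval] at hc
    refine hc.congr_fun fun n => ?_
    simp only [he]; ring
  have he0 := hez 0
  have he1 := hez 1
  simp only [he] at he0 he1
  norm_num at he0 he1
  refine ⟨by linarith, by linarith, fun n => ?_⟩
  have hen := hez (n + 2)
  simp only [he] at hen
  rw [if_pos (by omega : 1 ≤ n + 2), if_pos (by omega : 2 ≤ n + 2),
    if_neg (by omega : ¬ n + 2 = 0)] at hen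
  simp only [Nat.add_sub_cancel] at hen
  rw [(by omega : n + 2 - 1 = n + 1)] at hen
  linarith

set_option maxHeartbeats 1600000 in
private lemma myRec4 {p q : ℝ} (hp : p ≠ 0) (hq : q ≠ 0) {a b : ℕ → ℝ}
    (pa : ∀ n, p * a (n + 2) = 2 * a (n + 1) - a n)
    (pb : ∀ n, q * b (n + 2) = 2 * b (n + 1) - b n) (n : ℕ) :
    (p * q) ^ 2 * (a (n + 4) * b (n + 4)) - 4 * p * q * (a (n + 3) * b (n + 3))
      + (4 + 2 * p * q - 4 * (p - 1) * (q - 1)) * (a (n + 2) * b (n + 2))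
      - 4 * (a (n + 1) * b (n + 1)) + a n * b n = 0 := by
  have ea2 : a (n + 2) = (2 * a (n + 1) - a n) / p := by
    rw [eq_div_iff hp]; linarith [pa n]
  have ea3 : a (n + 3) = (2 * a (n + 2) - a (n + 1)) / p := by
    rw [eq_div_iff hp]; linarith [pa (n + 1)]
  have ea4 : a (n + 4) = (2 * a (n + 3) - a (n + 2)) / p := by
    rw [eq_div_iff hp]; linarith [pa (n + 2)]
  have eb2 : b (n + 2) = (2 * b (n + 1) - b n) / q := by
    rw [eq_div_iff hq]; linarith [pb n]
  have eb3 : b (n + 3) = (2 * b (n + 2) - b (n + 1)) / q := by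
    rw [eq_div_iff hq]; linarith [pb (n + 1)]
  have eb4 : b (n + 4) = (2 * b (n + 3) - b (n + 2)) / q := by
    rw [eq_div_iff hq]; linarith [pb (n + 2)]
  rw [ea4, eb4, ea3, eb3, ea2, eb2]
  field_simp
  ring

set_option maxHeartbeats 1600000 in
/-- Hadamard product of the expansions of 1/((1-z)²+λ) and 1/((1-z)²+μ). -/
theorem hadamard_quadratic (lam mu : ℝ) (hlam : 0 < lam) (hmu : 0 < mu)
    (a b : ℕ → ℝ) (εa εb : ℝ) (hεa : 0 < εa) (hεb : 0 < εb)
    (ha : ∀ z : ℝ, |z| < εa →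
      HasSum (fun k => a k * z ^ k) (1 / ((1 - z) ^ 2 + lam)))
    (hb : ∀ z : ℝ, |z| < εb →
      HasSum (fun k => b k * z ^ k) (1 / ((1 - z) ^ 2 + mu))) :
    ∃ ε > 0, ∀ z : ℝ, |z| < ε →
      HasSum (fun k => a k * b k * z ^ k)
        (((lam + 1) * (mu + 1) - z ^ 2) /
          (((1 - z) ^ 2 + lam * mu + lam + mu) ^ 2 - 4 * lam * mu * z ^ 2)) := by
  obtain ⟨ra0, ra1, ra⟩ := myRec hlam hεa ha
  obtain ⟨rb0, rb1, rb⟩ := myRec hmu hεb hb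
  have hp : (lam + 1) ≠ 0 := by positivity
  have hq : (mu + 1) ≠ 0 := by positivity
  -- coefficient bounds
  have hbound : ∀ (c : ℕ → ℝ) (ε : ℝ), 0 < ε →
      Summable (fun k => c k * (ε/2) ^ k) → ∃ C, ∀ k, |c k| * (ε/2) ^ k ≤ C := by
    intro c ε hε hsum
    obtain ⟨C, hC⟩ := (hsum.tendsto_atTop_zero.abs).bddAbove_range
    refine ⟨C, fun k => ?_⟩
    have := hC (Set.mem_range_self k)
    rwa [abs_mul, abs_of_pos (by positivity : (0:ℝ) < (ε/2)^k)] at this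
  obtain ⟨Ca, hCa⟩ := hbound a εa hεa
    ((ha (εa/2) (by rw [abs_of_pos (by positivity)]; linarith)).summable)
  obtain ⟨Cb, hCb⟩ := hbound b εb hεb
    ((hb (εb/2) (by rw [abs_of_pos (by positivity)]; linarith)).summable)
  set ρ : ℝ := (εa/2) * (εb/2) with hρ
  have hρpos : 0 < ρ := by positivity
  refine ⟨min ρ 1, by positivity, fun z hz => ?_⟩
  have hz1 : |z| < 1 := lt_of_lt_of_le hz (min_le_right _ _)
  have hzρ : |z| < ρ := lt_of_lt_of_le hz (min_le_left _ _)
  -- summability of the Hadamard product series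
  have hsumm : Summable (fun k => a k * b k * z ^ k) := by
    refine Summable.of_norm_bounded (g := fun k => (Ca * Cb) * (|z| / ρ) ^ k)
      (((summable_geometric_of_lt_one (by positivity)
        ((div_lt_one hρpos).mpr hzρ)).mul_left _)) fun k => ?_
    have hpow : ((εa/2))^k * ((εb/2))^k * (|z|/ρ)^k = |z|^k := by
      rw [← mul_pow, ← mul_pow, hρ]
      congr 1
      field_simp
    have h1 : ‖a k * b k * z ^ k‖ = (|a k| * (εa/2)^k) * (|b k| * (εb/2)^k) * (|z|/ρ)^k := by
      rw [Real.norm_eq_abs, abs_mul, abs_mul, abs_pow, ← hpow]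
      ring
    rw [h1]
    have ha0 : 0 ≤ |a k| * (εa/2)^k := by positivity
    have hb0 : 0 ≤ |b k| * (εb/2)^k := by positivity
    have hz0 : (0:ℝ) ≤ (|z|/ρ)^k := by positivity
    calc (|a k| * (εa/2)^k) * (|b k| * (εb/2)^k) * (|z|/ρ)^k
        ≤ Ca * (|b k| * (εb/2)^k) * (|z|/ρ)^k := by
          have := hCa k
          gcongr
      _ ≤ Ca * Cb * (|z|/ρ)^k := by
          have hCa0 : 0 ≤ Ca := le_trans ha0 (hCa k)
          have := hCb k
          gcongr
  set S : ℝ := ∑' k, a k * b k * z ^ k with hSdef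
  have hS : HasSum (fun k => a k * b k * z ^ k) S := hsumm.hasSum
  set c : ℕ → ℝ := fun k => a k * b k with hc
  set d0 : ℝ := ((lam+1)*(mu+1))^2 with hd0
  set d1 : ℝ := -(4*(lam+1)*(mu+1)) with hd1
  set d2 : ℝ := 4 + 2*(lam+1)*(mu+1) - 4*lam*mu with hd2
  set d3 : ℝ := (-4 : ℝ) with hd3
  set d4 : ℝ := (1 : ℝ) with hd4
  have h0 := hS.mul_left d0
  have h1 := (myShift 1 hS).mul_left d1
  have h2 := (myShift 2 hS).mul_left d2
  have h3 := (myShift 3 hS).mul_left d3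
  have h4 := (myShift 4 hS).mul_left d4
  have hT := (((h0.add h1).add h2).add h3).add h4
  set T : ℕ → ℝ := fun n =>
    d0 * (c n * z ^ n) + d1 * ((if 1 ≤ n then c (n-1) else 0) * z ^ n)
    + d2 * ((if 2 ≤ n then c (n-2) else 0) * z ^ n)
    + d3 * ((if 3 ≤ n then c (n-3) else 0) * z ^ n)
    + d4 * ((if 4 ≤ n then c (n-4) else 0) * z ^ n) with hTdef
  have hT' : HasSum T (d0 * S + d1 * (z ^ 1 * S) + d2 * (z ^ 2 * S)
      + d3 * (z ^ 3 * S) + d4 * (z ^ 4 * S)) := hT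
  have hT4 : ∀ n, 4 ≤ n → T n = 0 := by
    intro n hn
    obtain ⟨m, rfl⟩ : ∃ m, n = m + 4 := ⟨n - 4, by omega⟩
    have key := myRec4 hp hq ra rb m
    simp only [hTdef]
    rw [if_pos (by omega : 1 ≤ m + 4), if_pos (by omega : 2 ≤ m + 4),
      if_pos (by omega : 3 ≤ m + 4), if_pos (by omega : 4 ≤ m + 4)]
    rw [(by omega : m + 4 - 1 = m + 3), (by omega : m + 4 - 2 = m + 2),
      (by omega : m + 4 - 3 = m + 1), Nat.add_sub_cancel]
    simp only [hc, hd0, hd1, hd2, hd3, hd4]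
    have expand : ((lam+1)*(mu+1))^2 * (a (m+4) * b (m+4) * z ^ (m+4))
        + -(4*(lam+1)*(mu+1)) * (a (m+3) * b (m+3) * z ^ (m+4))
        + (4 + 2*(lam+1)*(mu+1) - 4*lam*mu) * (a (m+2) * b (m+2) * z ^ (m+4))
        + (-4:ℝ) * (a (m+1) * b (m+1) * z ^ (m+4))
        + (1:ℝ) * (a m * b m * z ^ (m+4))
        = (((lam+1) * (mu+1)) ^ 2 * (a (m+4) * b (m+4))
          - 4 * (lam+1) * (mu+1) * (a (m+3) * b (m+3))
          + (4 + 2 * (lam+1) * (mu+1) - 4 * ((lam+1) - 1) * ((mu+1) - 1))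
            * (a (m+2) * b (m+2))
          - 4 * (a (m+1) * b (m+1)) + a m * b m) * z ^ (m+4) := by ring
    rw [expand, key, zero_mul]
  have hfin : HasSum T (∑ n ∈ Finset.range 4, T n) := by
    refine hasSum_sum_of_ne_finset_zero fun n hn => ?_
    refine hT4 n ?_
    simp only [Finset.mem_range] at hn
    omega
  have hEq : d0 * S + d1 * (z ^ 1 * S) + d2 * (z ^ 2 * S)
      + d3 * (z ^ 3 * S) + d4 * (z ^ 4 * S) = ∑ n ∈ Finset.range 4, T n :=
    hT'.unique hfin
  have hsum4 : ∑ n ∈ Finset.range 4, T n = (lam + 1) * (mu + 1) - z ^ 2 := by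
    rw [Finset.sum_range_succ, Finset.sum_range_succ, Finset.sum_range_succ,
      Finset.sum_range_one]
    simp only [hTdef, hc, hd0, hd1, hd2, hd3, hd4]
    norm_num
    linear_combination ((-1) * (mu+1) * z^2 * b 0 + (1) * (lam+1) * (mu+1)^2 * b 0) * (ra0) + ((2) * z^3 * b 0 + (-2) * (mu+1) * z^2 * b 0 + (-1) * (mu+1) * z^3 * b 1 + (1) * (lam+1) * (mu+1)^2 * z * b 1) * (ra1) + ((-2) * (mu+1) * z^3 * b 1 + (1) * (lam+1) * (mu+1)^2 * z^2 * b 2) * (ra 0) + ((1) * (lam+1) * (mu+1)^2 * z^3 * b 3) * (ra 1) + ((-1) * z^2 + (1) * (lam+1) * (mu+1)) * (rb0) + ((-2) * (lam+1) * z^2 * a 0 + (2) * (lam+1) * (mu+1) * z * a 0) * (rb1) + ((-2) * (lam+1) * z^3 * a 1 + (2) * (lam+1) * (mu+1) * z^2 * a 1 + (-1) * (lam+1) * (mu+1) * z^2 * a 0) * (rb 0) + ((2) * (lam+1) * (mu+1) * z^3 * a 2 + (-1) * (lam+1) * (mu+1) * z^3 * a 1) * (rb 1)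
  set D : ℝ := ((1 - z) ^ 2 + lam * mu + lam + mu) ^ 2 - 4 * lam * mu * z ^ 2 with hD
  have hDS : D * S = (lam + 1) * (mu + 1) - z ^ 2 := by
    rw [← hsum4, ← hEq]
    simp only [hD, hd0, hd1, hd2, hd3, hd4]
    ring
  have hDpos : 0 < D := by
    rw [hD]
    have hz2 : z ^ 2 ≤ 1 := by nlinarith [sq_abs z, abs_nonneg z, hz1]
    have h4 : 4 * lam * mu * z ^ 2 ≤ 4 * lam * mu := by nlinarith [mul_pos hlam hmu]
    have h5 : (lam * mu + lam + mu) ^ 2 ≤ ((1 - z) ^ 2 + lam * mu + lam + mu) ^ 2 := by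
      have hle : lam * mu + lam + mu ≤ (1 - z) ^ 2 + lam * mu + lam + mu := by
        nlinarith [sq_nonneg (1 - z)]
      exact pow_le_pow_left₀ (by positivity) hle 2
    have h6 : 4 * lam * mu < (lam * mu + lam + mu) ^ 2 := by
      nlinarith [sq_nonneg (lam - mu), sq_nonneg (lam * mu),
        mul_pos (mul_pos hlam hmu) (add_pos hlam hmu)]
    linarith
  have hSval : S = ((lam + 1) * (mu + 1) - z ^ 2) / D := by
    rw [eq_div_iff (ne_of_gt hDpos), mul_comm]
    exact hDS
  rw [← hSval]
  exact hS
end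

section
/- Let μ ∈ (0,1), ω > 0, c > 0, and let σ be the measure on [0,μ] with density c·λ^{ω-1} with respect to Lebesgue measure. Then for every integer k > ω, the (k-1)-st derivative of the Stieltjes transform S(u) = ∫₀^μ dσ(λ)/(λ+u) satisfies S^{(k-1)}(u) ~ c·(-1)^{k-1}·Γ(k-ω)Γ(ω)·u^{ω-k} as u → 0⁺. -/
open Filter Topology MeasureTheory intervalIntegral Set

lemma aux_II (c ω u μ : ℝ) (hω : 0 < ω) (hu : 0 < u) (hμ : 0 < μ) (m : ℕ) :
    IntervalIntegrable (fun l => c * l ^ (ω - 1) / (l + u) ^ m) volume 0 μ := by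
  rw [intervalIntegrable_iff_integrableOn_Ioc_of_le hμ.le]
  have hbase : IntegrableOn (fun l : ℝ => l ^ (ω - 1)) (Ioc 0 μ) := by
    have := intervalIntegral.intervalIntegrable_rpow' (a := 0) (b := μ) (r := ω - 1) (by linarith)
    rwa [intervalIntegrable_iff_integrableOn_Ioc_of_le hμ.le] at this
  refine ((hbase.const_mul (|c| * (u ^ m)⁻¹)).mono' ?_ ?_)
  · refine ContinuousOn.aestronglyMeasurable ?_ measurableSet_Ioc
    refine ContinuousOn.div ?_ ?_ ?_
    · exact continuousOn_const.mul (ContinuousOn.rpow_const continuousOn_id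
        (fun x hx => Or.inl (ne_of_gt hx.1)))
    · exact ((continuous_id.add continuous_const).pow m).continuousOn
    · intro x hx; exact ne_of_gt (pow_pos (by linarith [hx.1]) m)
  · filter_upwards [ae_restrict_mem measurableSet_Ioc] with l hl
    have hl0 : 0 < l := hl.1
    have h1 : 0 < (l + u) ^ m := pow_pos (by linarith) m
    have h2 : u ^ m ≤ (l + u) ^ m := pow_le_pow_left₀ hu.le (by linarith) m
    rw [Real.norm_eq_abs, abs_div, abs_mul, abs_of_pos (Real.rpow_pos_of_pos hl0 _),
      abs_of_pos h1]
    rw [div_le_iff₀ h1]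
    calc |c| * l ^ (ω - 1) ≤ |c| * (u ^ m)⁻¹ * l ^ (ω - 1) * (l + u) ^ m := by
          rw [mul_assoc, mul_assoc]
          apply mul_le_mul_of_nonneg_left _ (abs_nonneg c)
          rw [← mul_assoc, mul_comm ((u ^ m)⁻¹), mul_assoc]
          nth_rewrite 1 [← mul_one (l ^ (ω - 1))]
          apply mul_le_mul_of_nonneg_left _ (Real.rpow_nonneg hl0.le _)
          rw [← div_eq_inv_mul, le_div_iff₀ (pow_pos hu m)]
          simpa using h2

lemma aux_deriv (c ω u μ : ℝ) (hω : 0 < ω) (hu : 0 < u) (hμ : 0 < μ) (n : ℕ) :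
    HasDerivAt (fun x => ∫ l in (0:ℝ)..μ, c * l ^ (ω - 1) / (l + x) ^ (n + 1))
      (-(n + 1 : ℝ) * ∫ l in (0:ℝ)..μ, c * l ^ (ω - 1) / (l + u) ^ (n + 2)) u := by
  have hmeas : ∀ x : ℝ, 0 < x → ∀ m : ℕ, AEStronglyMeasurable
      (fun l => c * l ^ (ω - 1) / (l + x) ^ m) (volume.restrict (Set.uIoc (0:ℝ) μ)) := by
    intro x hx m
    rw [uIoc_of_le hμ.le]
    refine ContinuousOn.aestronglyMeasurable ?_ measurableSet_Ioc
    refine ContinuousOn.div ?_ ?_ ?_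
    · exact continuousOn_const.mul (ContinuousOn.rpow_const continuousOn_id
        (fun y hy => Or.inl (ne_of_gt hy.1)))
    · exact ((continuous_id.add continuous_const).pow m).continuousOn
    · intro y hy; exact ne_of_gt (pow_pos (by linarith [hy.1]) m)
  have key := intervalIntegral.hasDerivAt_integral_of_dominated_loc_of_deriv_le
    (F := fun x l => c * l ^ (ω - 1) / (l + x) ^ (n + 1))
    (F' := fun x l => -(n+1:ℝ) * (c * l ^ (ω - 1) / (l + x) ^ (n + 2)))
    (x₀ := u) (a := 0) (b := μ) (μ := volume)
    (bound := fun l => (n+1:ℝ) * (|c| * l ^ (ω - 1) / (u/2) ^ (n + 2)))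
    (Metric.ball_mem_nhds u (half_pos hu)) ?_ ?_ ?_ ?_ ?_ ?_
  · have h2 := key.2
    rwa [intervalIntegral.integral_const_mul] at h2
  · filter_upwards [eventually_nhds_iff.mpr ⟨Set.Ioi 0, fun y hy => hy, isOpen_Ioi, hu⟩]
      with x hx using hmeas x hx (n+1)
  · exact aux_II c ω u μ hω hu hμ (n+1)
  · exact (AEStronglyMeasurable.const_mul (hmeas u hu (n+2)) _)
  · refine Filter.Eventually.of_forall (fun l hl x hx => ?_)
    rw [uIoc_of_le hμ.le] at hl
    rw [Metric.mem_ball, Real.dist_eq, abs_lt] at hx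
    have hx2 : u/2 < x := by linarith [hx.1]
    have hl0 : 0 < l := hl.1
    have hlx : 0 < l + x := by linarith
    rw [norm_mul, norm_div, norm_mul, Real.norm_eq_abs, Real.norm_eq_abs, Real.norm_eq_abs,
      Real.norm_eq_abs, abs_of_pos (Real.rpow_pos_of_pos hl0 _), abs_of_pos (pow_pos hlx _)]
    have : |(-(n+1:ℝ))| = (n+1:ℝ) := by rw [abs_neg, abs_of_pos]; positivity
    rw [this]
    apply mul_le_mul_of_nonneg_left _ (by positivity)
    apply div_le_div_of_nonneg_left (by positivity) (by positivity)
    exact pow_le_pow_left₀ (by linarith) (by linarith) _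
  · have h0 := (aux_II (|c|/(u/2)^(n+2)) ω u μ hω hu hμ 0).const_mul (n+1:ℝ)
    have heq : (fun l => (n+1:ℝ) * (|c|/(u/2)^(n+2) * l ^ (ω-1) / (l+u) ^ 0))
        = (fun l : ℝ => (n+1:ℝ) * (|c| * l ^ (ω - 1) / (u/2) ^ (n + 2))) := by
      funext l; rw [pow_zero]; ring
    rwa [heq] at h0
  · refine Filter.Eventually.of_forall (fun l hl x hx => ?_)
    rw [uIoc_of_le hμ.le] at hl
    rw [Metric.mem_ball, Real.dist_eq, abs_lt] at hx
    have hlx : 0 < l + x := by linarith [hl.1, hx.1]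
    have h1 : HasDerivAt (fun x : ℝ => (l + x) ^ (n+1)) ((n+1 : ℕ) * (l + x) ^ n * 1) x :=
      HasDerivAt.fun_pow ((hasDerivAt_id x).const_add l) (n+1)
    have h3 := ((h1.inv (ne_of_gt (pow_pos hlx _))).const_mul (c * l ^ (ω - 1)))
    have hfun : (fun y : ℝ => c * l ^ (ω - 1) / (l + y) ^ (n + 1))
        = (fun y : ℝ => c * l ^ (ω - 1) * ((l + y) ^ (n + 1))⁻¹) := by
      funext y; rw [div_eq_mul_inv]
    have heq : -(↑n+1:ℝ)*(c*l^(ω-1)/(l+x)^(n+2))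
        = c * l^(ω-1) * (-((↑(n+1):ℝ)*(l+x)^n*1)/((l+x)^(n+1))^2) := by
      have hne : l + x ≠ 0 := ne_of_gt hlx
      field_simp
      push_cast
      ring
    rw [hfun]
    beta_reduce
    rw [heq]
    exact h3

lemma aux_iter (mu ω c : ℝ) (hmu : 0 < mu) (hω : 0 < ω)
    (S : ℝ → ℝ)
    (hS : ∀ u : ℝ, 0 < u → S u = ∫ lam in (0:ℝ)..mu, c * lam ^ (ω - 1) / (lam + u)) :
    ∀ n : ℕ, ∀ u : ℝ, 0 < u →
      iteratedDeriv n S u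
        = (-1:ℝ)^n * ((Nat.factorial n : ℕ) : ℝ) * ∫ l in (0:ℝ)..mu, c * l ^ (ω - 1) / (l + u) ^ (n + 1) := by
  intro n
  induction n with
  | zero =>
    intro u hu
    rw [iteratedDeriv_zero, hS u hu]
    simp
  | succ n ih =>
    intro u hu
    rw [iteratedDeriv_succ]
    have hev : iteratedDeriv n S =ᶠ[𝓝 u]
        fun v => (-1:ℝ)^n * ((Nat.factorial n : ℕ) : ℝ) * ∫ l in (0:ℝ)..mu, c * l ^ (ω - 1) / (l + v) ^ (n + 1) := by
      filter_upwards [Ioi_mem_nhds hu] with v hv using ih v hv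
    rw [hev.deriv_eq]
    have hd := ((aux_deriv c ω u mu hω hu hmu n).const_mul ((-1:ℝ)^n * ((Nat.factorial n : ℕ) : ℝ))).deriv
    rw [hd]
    push_cast [Nat.factorial_succ]
    ring

lemma aux_scale (c ω u mu : ℝ) (hu : 0 < u) (hmu : 0 < mu) (k : ℕ) :
    ∫ l in (0:ℝ)..mu, c * l ^ (ω - 1) / (l + u) ^ k
      = c * u ^ (ω - (k:ℝ)) * ∫ t in (0:ℝ)..(mu/u), t ^ (ω - 1) / (1 + t) ^ k := by
  have h1 := intervalIntegral.integral_comp_mul_left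
    (a := 0) (b := mu/u) (c := u)
    (f := fun l => c * l ^ (ω - 1) / (l + u) ^ k) (ne_of_gt hu)
  rw [mul_zero, mul_div_cancel₀ _ (ne_of_gt hu)] at h1
  have h2 : ∫ t in (0:ℝ)..(mu/u), c * (u * t) ^ (ω - 1) / (u * t + u) ^ k
      = (c * u ^ (ω - 1 - (k:ℝ))) * ∫ t in (0:ℝ)..(mu/u), t ^ (ω - 1) / (1 + t) ^ k := by
    rw [← intervalIntegral.integral_const_mul]
    apply intervalIntegral.integral_congr
    intro t ht
    rw [uIcc_of_le (by positivity)] at ht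
    have ht0 : 0 ≤ t := ht.1
    have huk : u * t + u = u * (1 + t) := by ring
    simp only []
    have hpow : u ^ (ω - 1 - (k:ℝ)) = u ^ (ω-1) / u ^ k := by
      rw [Real.rpow_sub hu, Real.rpow_natCast]
    rw [huk, mul_pow, Real.mul_rpow hu.le ht0, hpow]
    have hupow : (0:ℝ) < u ^ k := pow_pos hu k
    have h1t : (0:ℝ) < (1 + t) ^ k := pow_pos (by linarith) k
    field_simp
  rw [h2, smul_eq_mul] at h1
  have h4 : (∫ l in (0:ℝ)..mu, c * l ^ (ω - 1) / (l + u) ^ k)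
      = u * ((c * u ^ (ω - 1 - (k:ℝ))) * ∫ t in (0:ℝ)..(mu/u), t ^ (ω - 1) / (1 + t) ^ k) := by
    rw [h1, ← mul_assoc, mul_inv_cancel₀ (ne_of_gt hu), one_mul]
  rw [h4]
  have h5 : u * u ^ (ω - 1 - (k:ℝ)) = u ^ (ω - (k:ℝ)) := by
    nth_rewrite 1 [← Real.rpow_one u]
    rw [← Real.rpow_add hu]
    congr 1
    ring
  rw [← mul_assoc, ← mul_assoc, mul_comm u c, mul_assoc c u, h5]

lemma aux_integrableOn (ω : ℝ) (hω : 0 < ω) (k : ℕ) (hk : ω < k) :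
    IntegrableOn (fun t : ℝ => t ^ (ω - 1) / (1 + t) ^ k) (Ioi 0) := by
  have hmeas : ∀ s : Set ℝ, s ⊆ Ioi 0 → MeasurableSet s →
      AEStronglyMeasurable (fun t : ℝ => t ^ (ω - 1) / (1 + t) ^ k) (volume.restrict s) := by
    intro s hs hms
    refine ContinuousOn.aestronglyMeasurable ?_ hms
    refine ContinuousOn.div ?_ ?_ ?_
    · exact ContinuousOn.rpow_const continuousOn_id (fun x hx => Or.inl (ne_of_gt (hs hx)))
    · exact ((continuous_const.add continuous_id).pow k).continuousOn
    · intro x hx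
      have hx0 : (0:ℝ) < x := hs hx
      exact ne_of_gt (pow_pos (by linarith) k)
  have h1 : IntegrableOn (fun t : ℝ => t ^ (ω - 1) / (1 + t) ^ k) (Ioc 0 1) := by
    have hbase : IntegrableOn (fun t : ℝ => t ^ (ω - 1)) (Ioc 0 1) := by
      have := intervalIntegral.intervalIntegrable_rpow' (a := 0) (b := 1) (r := ω - 1)
        (by linarith)
      rwa [intervalIntegrable_iff_integrableOn_Ioc_of_le zero_le_one] at this
    refine hbase.mono' (hmeas _ (fun x hx => hx.1) measurableSet_Ioc) ?_
    filter_upwards [ae_restrict_mem measurableSet_Ioc] with t ht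
    have ht0 : 0 < t := ht.1
    rw [Real.norm_eq_abs, abs_div, abs_of_pos (Real.rpow_pos_of_pos ht0 _),
      abs_of_pos (pow_pos (by linarith) k)]
    rw [div_le_iff₀ (pow_pos (by linarith) k)]
    nth_rewrite 1 [← mul_one (t ^ (ω - 1))]
    exact mul_le_mul_of_nonneg_left (one_le_pow₀ (by linarith)) (Real.rpow_nonneg ht0.le _)
  have h2 : IntegrableOn (fun t : ℝ => t ^ (ω - 1) / (1 + t) ^ k) (Ioi 1) := by
    have hbase : IntegrableOn (fun t : ℝ => t ^ (ω - 1 - k)) (Ioi 1) :=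
      integrableOn_Ioi_rpow_of_lt (by linarith) one_pos
    refine hbase.mono' (hmeas _ (fun x hx => Set.mem_Ioi.mpr (lt_trans one_pos hx)) measurableSet_Ioi) ?_
    filter_upwards [ae_restrict_mem measurableSet_Ioi] with t ht
    have ht0 : (0:ℝ) < t := lt_trans one_pos ht
    rw [Real.norm_eq_abs, abs_div, abs_of_pos (Real.rpow_pos_of_pos ht0 _),
      abs_of_pos (pow_pos (by linarith) k)]
    have htk : t ^ (k:ℝ) ≤ (1 + t) ^ k := by
      rw [Real.rpow_natCast]
      exact pow_le_pow_left₀ ht0.le (by linarith) k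
    calc t ^ (ω - 1) / (1 + t) ^ k ≤ t ^ (ω - 1) / t ^ (k:ℝ) := by
          gcongr
      _ = t ^ (ω - 1 - k) := by rw [← Real.rpow_sub ht0]
  have := h1.union h2
  rwa [Ioc_union_Ioi_eq_Ioi zero_le_one] at this

lemma aux_realbeta (ω : ℝ) (hω : 0 < ω) (k : ℕ) (hk : ω < k) :
    ∫ x in (0:ℝ)..1, x ^ (ω - 1) * (1 - x) ^ ((k:ℝ) - ω - 1)
      = Real.Gamma ω * Real.Gamma ((k:ℝ) - ω) / Real.Gamma k := by
  have hk0 : (0:ℝ) < k := lt_trans hω hk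
  have hs : (0:ℝ) < (ω:ℂ).re := by simpa using hω
  have ht : (0:ℝ) < (((k:ℝ) - ω : ℝ) : ℂ).re := by simpa using sub_pos.mpr hk
  have hbeta := Complex.Gamma_mul_Gamma_eq_betaIntegral hs ht
  have hsum : (ω:ℂ) + (((k:ℝ) - ω : ℝ):ℂ) = ((k:ℝ):ℂ) := by push_cast; ring
  rw [hsum] at hbeta
  have hB : Complex.betaIntegral (ω:ℂ) (((k:ℝ) - ω : ℝ):ℂ)
      = ((∫ x in (0:ℝ)..1, x ^ (ω - 1) * (1 - x) ^ ((k:ℝ) - ω - 1) : ℝ) : ℂ) := by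
    rw [Complex.betaIntegral, ← intervalIntegral.integral_ofReal]
    apply intervalIntegral.integral_congr
    intro x hx
    rw [uIcc_of_le zero_le_one] at hx
    have hx0 : (0:ℝ) ≤ x := hx.1
    have hx1 : (0:ℝ) ≤ 1 - x := by linarith [hx.2]
    beta_reduce
    rw [Complex.ofReal_mul, Complex.ofReal_cpow hx0, Complex.ofReal_cpow hx1]
    push_cast
    ring
  rw [hB] at hbeta
  have hfin : ((Real.Gamma ω * Real.Gamma ((k:ℝ) - ω) : ℝ) : ℂ)
      = ((Real.Gamma ((k:ℝ)) * ∫ x in (0:ℝ)..1, x ^ (ω - 1) * (1 - x) ^ ((k:ℝ) - ω - 1) : ℝ) : ℂ) := by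
    push_cast
    rw [← Complex.Gamma_ofReal, ← Complex.Gamma_ofReal, ← Complex.Gamma_ofReal]
    exact hbeta
  rw [Complex.ofReal_inj] at hfin
  have hΓk : Real.Gamma ((k:ℝ)) ≠ 0 := ne_of_gt (Real.Gamma_pos_of_pos hk0)
  field_simp [hΓk] at hfin ⊢
  linarith [hfin]

lemma aux_Ioival (ω : ℝ) (hω : 0 < ω) (k : ℕ) (hk : ω < k) :
    ∫ t in Ioi (0:ℝ), t ^ (ω - 1) / (1 + t) ^ k
      = Real.Gamma ω * Real.Gamma ((k:ℝ) - ω) / Real.Gamma k := by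
  have himg : (fun x : ℝ => x / (1 - x)) '' Ioo 0 1 = Ioi 0 := by
    ext y
    constructor
    · rintro ⟨x, hx, rfl⟩
      exact div_pos hx.1 (by linarith [hx.2])
    · intro hy
      have hy' : (0:ℝ) < y := hy
      refine ⟨y / (1 + y), ⟨div_pos hy' (by linarith), ?_⟩, ?_⟩
      · rw [div_lt_one (by linarith)]; linarith
      · have h1 : 1 - y / (1 + y) = 1 / (1 + y) := by field_simp; ring
        simp only [h1]
        field_simp
  have hderiv : ∀ x ∈ Ioo (0:ℝ) 1, HasDerivWithinAt (fun x : ℝ => x / (1 - x))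
      (1 / (1 - x) ^ 2) (Ioo 0 1) x := by
    intro x hx
    have h1x : 1 - x ≠ 0 := by intro h; rw [sub_eq_zero] at h; linarith [hx.2]
    have hd : HasDerivAt (fun x : ℝ => x / (1 - x)) ((1 * (1 - x) - x * (0 - 1)) / (1 - x) ^ 2) x :=
      (hasDerivAt_id x).div ((hasDerivAt_const x 1).sub (hasDerivAt_id x)) h1x
    have heq : (1 * (1 - x) - x * (0 - 1)) / (1 - x) ^ 2 = 1 / (1 - x) ^ 2 := by
      field_simp
      ring
    rw [heq] at hd
    exact hd.hasDerivWithinAt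
  have hinj : InjOn (fun x : ℝ => x / (1 - x)) (Ioo 0 1) := by
    intro a ha b hb hab
    simp only [] at hab
    have h1a : 1 - a ≠ 0 := by intro h; rw [sub_eq_zero] at h; linarith [ha.2]
    have h1b : 1 - b ≠ 0 := by intro h; rw [sub_eq_zero] at h; linarith [hb.2]
    field_simp at hab
    nlinarith [hab]
  have hcv := MeasureTheory.integral_image_eq_integral_abs_deriv_smul measurableSet_Ioo
    hderiv hinj (fun t => t ^ (ω - 1) / (1 + t) ^ k)
  rw [himg] at hcv
  rw [hcv]
  have hpt : ∀ x ∈ Ioo (0:ℝ) 1,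
      |1 / (1 - x) ^ 2| • ((x / (1 - x)) ^ (ω - 1) / (1 + x / (1 - x)) ^ k)
        = x ^ (ω - 1) * (1 - x) ^ ((k:ℝ) - ω - 1) := by
    intro x hx
    have hx0 : 0 < x := hx.1
    have h1x : 0 < 1 - x := by linarith [hx.2]
    have hfx : 1 + x / (1 - x) = 1 / (1 - x) := by field_simp; ring
    have hfval : (x / (1 - x)) ^ (ω - 1) = x ^ (ω - 1) / (1 - x) ^ (ω - 1) :=
      Real.div_rpow hx0.le h1x.le (ω - 1)
    rw [smul_eq_mul, hfx, hfval, div_pow, one_pow,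
      abs_of_pos (by positivity : (0:ℝ) < 1 / (1 - x) ^ 2)]
    have hexp : (1 - x) ^ ((k:ℝ) - ω - 1)
        = (1 - x) ^ (k:ℕ) * ((1 - x) ^ (ω - 1))⁻¹ * ((1 - x) ^ (2:ℕ))⁻¹ := by
      rw [← Real.rpow_natCast (1-x) k, ← Real.rpow_natCast (1-x) 2,
        ← Real.rpow_neg h1x.le (ω - 1), ← Real.rpow_neg h1x.le (((2:ℕ):ℝ)),
        ← Real.rpow_add h1x, ← Real.rpow_add h1x]
      congr 1
      push_cast
      ring
    rw [hexp]
    have hωp : (0:ℝ) < (1 - x) ^ (ω - 1) := Real.rpow_pos_of_pos h1x _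
    have hkp : (0:ℝ) < (1 - x) ^ (k:ℕ) := pow_pos h1x _
    field_simp
  rw [MeasureTheory.setIntegral_congr_fun measurableSet_Ioo hpt]
  rw [← MeasureTheory.integral_Ioc_eq_integral_Ioo,
    ← intervalIntegral.integral_of_le zero_le_one]
  exact aux_realbeta ω hω k hk


/-- For the continuous spectral measure dσ(λ) = c λ^{ω-1} 1_{[0,μ]} dλ, the derivatives
of the Stieltjes transform satisfy
S^{(k-1)}(u) ~ c(-1)^{k-1} Γ(k-ω)Γ(ω) u^{ω-k} as u → 0⁺, for integers k > ω. -/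
theorem stieltjes_continuous_spectral (mu ω c : ℝ)
    (hmu : mu ∈ Set.Ioo (0:ℝ) 1) (hω : 0 < ω) (hc : 0 < c)
    (S : ℝ → ℝ)
    (hS : ∀ u : ℝ, 0 < u →
      S u = ∫ lam in (0:ℝ)..mu, c * lam ^ (ω - 1) / (lam + u)) :
    ∀ k : ℕ, ω < k →
      Tendsto (fun u : ℝ =>
          iteratedDeriv (k - 1) S u /
            (c * (-1 : ℝ) ^ (k - 1) * Real.Gamma (k - ω) * Real.Gamma ω *
              u ^ (ω - k)))
        (nhdsWithin 0 (Set.Ioi 0)) (nhds 1) := by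
  intro k hk
  have hmu0 : 0 < mu := hmu.1
  have hkpos : 0 < k := by
    by_contra h
    push_neg at h
    interval_cases k
    · simp at hk; linarith
  have hks : k - 1 + 1 = k := Nat.succ_pred_eq_of_pos hkpos
  set I : ℝ := ∫ t in Ioi (0:ℝ), t ^ (ω - 1) / (1 + t) ^ k with hIdef
  have hI : I = Real.Gamma ω * Real.Gamma ((k:ℝ) - ω) / Real.Gamma k := aux_Ioival ω hω k hk
  have hΓk : Real.Gamma ((k:ℝ)) = ((Nat.factorial (k-1) : ℕ) : ℝ) := by
    have := Real.Gamma_nat_eq_factorial (k-1)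
    rw [show ((k-1 : ℕ) : ℝ) + 1 = (k : ℝ) by exact_mod_cast congrArg (fun n : ℕ => (n:ℝ)) hks] at this
    exact_mod_cast this
  have hΓ1 : 0 < Real.Gamma ((k:ℝ) - ω) := Real.Gamma_pos_of_pos (by linarith)
  have hΓ2 : 0 < Real.Gamma ω := Real.Gamma_pos_of_pos hω
  have hfac : (0:ℝ) < ((Nat.factorial (k-1) : ℕ) : ℝ) := by exact_mod_cast Nat.factorial_pos (k-1)
  set K : ℝ := ((Nat.factorial (k-1) : ℕ) : ℝ) / (Real.Gamma ((k:ℝ) - ω) * Real.Gamma ω) with hKdef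
  have htend1 : Tendsto (fun u : ℝ => mu / u) (𝓝[>] (0:ℝ)) atTop := by
    have h := tendsto_inv_nhdsGT_zero (𝕜 := ℝ)
    have := h.const_mul_atTop hmu0
    simpa [div_eq_mul_inv] using this
  have htend2 := MeasureTheory.intervalIntegral_tendsto_integral_Ioi 0
    (aux_integrableOn ω hω k hk) htend1
  have htend3 : Tendsto (fun u : ℝ =>
      (∫ t in (0:ℝ)..(mu/u), t ^ (ω - 1) / (1 + t) ^ k) * K) (𝓝[>] (0:ℝ)) (𝓝 1) := by
    have := htend2.mul_const K
    have hIK : I * K = 1 := by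
      rw [hI, hΓk, hKdef]
      field_simp
    rwa [hIK] at this
  refine htend3.congr' ?_
  filter_upwards [self_mem_nhdsWithin] with u hu
  have hu0 : (0:ℝ) < u := hu
  have hiter := aux_iter mu ω c hmu0 hω S hS (k-1) u hu0
  rw [hks] at hiter
  have hscale := aux_scale c ω u mu hu0 hmu0 k
  rw [hscale] at hiter
  rw [hiter]
  have hP : (0:ℝ) < u ^ (ω - (k:ℝ)) := Real.rpow_pos_of_pos hu0 _
  have hneg : ((-1:ℝ)) ^ (k-1) ≠ 0 := pow_ne_zero _ (by norm_num)
  rw [hKdef]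
  field_simp
end

section
/- Let H = ∑_i λ_i u_i ⊗ u_i be a compact positive operator on a Hilbert space with γ λ_i ∈ [0,1], and σ the measure (1/(2γ)) ∑_i γλ_i ⟨u_i, θ₀⟩² δ_{γλ_i}. Then for z ∈ [0,1), ∑_{k≥0} z^k · ½⟨θ_k, H θ_k⟩ = ∫₀¹ dσ(λ)/(1 - z(1-λ)²), where θ_k = (I - γH)^k θ₀. -/
open Filter Topology MeasureTheory
open scoped RealInnerProductSpace

section aux
set_option linter.unusedSectionVars false
variable {E : Type*} [NormedAddCommGroup E] [InnerProductSpace ℝ E] [CompleteSpace E]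

lemma inner_H_eq (H : E →L[ℝ] E) (u : HilbertBasis ℕ ℝ E) (lam : ℕ → ℝ)
    (heig : ∀ i, H (u i) = lam i • u i) (x : E) (j : ℕ) :
    ⟪u j, H x⟫ = lam j * u.repr x j := by
  have h1 : HasSum (fun i => u.repr x i • u i) x := u.hasSum_repr x
  have h2 := h1.mapL H
  have h3 := h2.mapL (innerSL ℝ (u j))
  have h4 : (fun i => (innerSL ℝ (u j)) (H (u.repr x i • u i)))
      = fun i => if i = j then lam j * u.repr x j else 0 := by
    funext i
    rw [innerSL_apply_apply, ContinuousLinearMap.map_smul, heig, inner_smul_right, inner_smul_right,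
      orthonormal_iff_ite.mp u.orthonormal j i]
    by_cases h : i = j
    · subst h; simp; ring
    · simp [h, Ne.symm h]
  rw [h4] at h3
  exact h3.unique (hasSum_ite_eq j _)

lemma repr_pow_eq (H : E →L[ℝ] E) (γ : ℝ) (u : HilbertBasis ℕ ℝ E) (lam : ℕ → ℝ)
    (heig : ∀ i, H (u i) = lam i • u i) (x : E) (j : ℕ) (k : ℕ) :
    u.repr (((1 - γ • H) ^ k) x) j = (1 - γ * lam j) ^ k * u.repr x j := by
  induction k with
  | zero => simp
  | succ k ih =>
    rw [pow_succ', ContinuousLinearMap.mul_apply]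
    have hx : u.repr ((1 - γ • H) (((1 - γ • H) ^ k) x)) j
        = (1 - γ * lam j) * u.repr (((1 - γ • H) ^ k) x) j := by
      set y := ((1 - γ • H) ^ k) x
      have : (1 - γ • H) y = y - γ • H y := by
        simp [ContinuousLinearMap.sub_apply]
      rw [this, u.repr_apply_apply, inner_sub_right, inner_smul_right,
        inner_H_eq H u lam heig, u.repr_apply_apply]
      ring
    rw [hx, ih]
    ring

lemma quad_form_eq (H : E →L[ℝ] E) (u : HilbertBasis ℕ ℝ E) (lam : ℕ → ℝ)
    (heig : ∀ i, H (u i) = lam i • u i) (x : E) :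
    ⟪x, H x⟫ = ∑' j, lam j * (u.repr x j) ^ 2 := by
  rw [← u.tsum_inner_mul_inner x (H x)]
  congr 1
  funext j
  rw [inner_H_eq H u lam heig, real_inner_comm, ← u.repr_apply_apply]
  ring
end aux

set_option maxHeartbeats 800000 in
/-- z-transform of gradient descent performance as an integral against the
weighted spectral measure σ = (1/(2γ)) ∑_i γλ_i ⟨u_i,θ₀⟩² δ_{γλ_i}. -/
theorem gd_ztransform_spectral
    {E : Type*} [NormedAddCommGroup E] [InnerProductSpace ℝ E] [CompleteSpace E]
    (H : E →L[ℝ] E) (γ : ℝ) (hγ : 0 < γ)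
    (u : HilbertBasis ℕ ℝ E) (lam : ℕ → ℝ)
    (heig : ∀ i, H (u i) = lam i • u i)
    (hlam : ∀ i, γ * lam i ∈ Set.Icc (0:ℝ) 1)
    (θ₀ : E) (θ : ℕ → E) (hθ : ∀ k, θ k = ((1 - γ • H) ^ k) θ₀)
    (σ : Measure ℝ)
    (hσ : σ = Measure.sum (fun i =>
      (ENNReal.ofReal (γ * lam i * (u.repr θ₀ i) ^ 2 / (2 * γ))) •
        Measure.dirac (γ * lam i))) :
    ∀ z ∈ Set.Ico (0:ℝ) 1,
      ∑' k : ℕ, z ^ k * (1 / 2 * ⟪θ k, H (θ k)⟫) =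
        ∫ lam', (1 - z * (1 - lam') ^ 2)⁻¹ ∂σ := by
  subst hσ
  rintro z ⟨hz0, hz1⟩
  have hlam0 : ∀ j, 0 ≤ lam j := fun j => by nlinarith [(hlam j).1]
  have hlam1 : ∀ j, lam j ≤ 1 / γ := fun j => by
    rw [le_div_iff₀ hγ]; nlinarith [(hlam j).2]
  set a : ℕ → ℝ := fun j => u.repr θ₀ j with ha
  set c : ℕ → ℝ := fun j => lam j * (a j) ^ 2 / 2 with hc
  set r : ℕ → ℝ := fun j => z * (1 - γ * lam j) ^ 2 with hr
  have hc0 : ∀ j, 0 ≤ c j := fun j => by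
    have := hlam0 j; positivity
  have hr0 : ∀ j, 0 ≤ r j := fun j => by positivity
  have hrz : ∀ j, r j ≤ z := fun j => by
    have h1 := (hlam j).1; have h2 := (hlam j).2
    have key : (1 - γ * lam j) ^ 2 ≤ 1 := by nlinarith
    calc r j = z * (1 - γ * lam j) ^ 2 := rfl
      _ ≤ z * 1 := mul_le_mul_of_nonneg_left key hz0
      _ = z := mul_one z
  have hr1 : ∀ j, r j < 1 := fun j => lt_of_le_of_lt (hrz j) hz1
  have h1z : (0:ℝ) < 1 - z := by linarith
  have h1r : ∀ j, (0:ℝ) < 1 - r j := fun j => by have := hr1 j; linarith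
  -- summability of a j ^ 2
  have hsa : Summable (fun j => (a j) ^ 2) := by
    refine (u.summable_inner_mul_inner θ₀ θ₀).congr fun j => ?_
    rw [real_inner_comm, ← u.repr_apply_apply, sq]
  have hsc : Summable c := by
    refine Summable.of_nonneg_of_le hc0 (fun j => ?_) (hsa.mul_left (1 / (2 * γ)))
    have h1 : lam j * (a j) ^ 2 ≤ (1 / γ) * (a j) ^ 2 :=
      mul_le_mul_of_nonneg_right (hlam1 j) (sq_nonneg _)
    have h2 : 1 / (2 * γ) * (a j) ^ 2 = ((1 / γ) * (a j) ^ 2) / 2 := by ring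
    rw [hc, h2]
    linarith
  have hgeo : ∀ j, HasSum (fun k => c j * r j ^ k) (c j * (1 - r j)⁻¹) := fun j =>
    (hasSum_geometric_of_lt_one (hr0 j) (hr1 j)).mul_left (c j)
  have hbound : ∀ j, c j * (1 - r j)⁻¹ ≤ c j * (1 - z)⁻¹ := fun j => by
    apply mul_le_mul_of_nonneg_left _ (hc0 j)
    apply inv_anti₀ h1z
    have := hrz j; linarith
  have hF : Summable (Function.uncurry fun j k => c j * r j ^ k) := by
    refine (summable_prod_of_nonneg ?_).mpr ⟨fun j => (hgeo j).summable, ?_⟩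
    · rintro ⟨j, k⟩
      exact mul_nonneg (hc0 j) (pow_nonneg (hr0 j) k)
    · refine Summable.of_nonneg_of_le (fun j => tsum_nonneg fun k =>
        mul_nonneg (hc0 j) (pow_nonneg (hr0 j) k)) (fun j => ?_) (hsc.mul_right (1 - z)⁻¹)
      simp only [Function.uncurry_apply_pair]
      rw [(hgeo j).tsum_eq]
      exact hbound j
  -- LHS
  have hterm : ∀ k, z ^ k * (1 / 2 * ⟪θ k, H (θ k)⟫) = ∑' j, c j * r j ^ k := by
    intro k
    rw [hθ k, quad_form_eq H u lam heig, ← tsum_mul_left, ← tsum_mul_left]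
    congr 1; funext j
    rw [repr_pow_eq H γ u lam heig]
    simp only [hc, hr, ← ha, mul_pow, ← pow_mul]
    ring
  have hLHS : ∑' k : ℕ, z ^ k * (1 / 2 * ⟪θ k, H (θ k)⟫) = ∑' j, c j * (1 - r j)⁻¹ := by
    have h2 : ∀ k, Summable fun j => c j * r j ^ k := fun k => by
      refine Summable.of_nonneg_of_le (fun j => mul_nonneg (hc0 j) (pow_nonneg (hr0 j) k))
        (fun j => ?_) (hsc.mul_right (z ^ k))
      exact mul_le_mul_of_nonneg_left (pow_le_pow_left₀ (hr0 j) (hrz j) k) (hc0 j)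
    rw [tsum_congr hterm, hF.tsum_comm' (fun j => (hgeo j).summable) h2]
    exact tsum_congr fun j => (hgeo j).tsum_eq
  -- RHS
  set f : ℝ → ℝ := fun lam' => (1 - z * (1 - lam') ^ 2)⁻¹ with hf
  have hfm : Measurable f := (by fun_prop : Measurable fun l' : ℝ => 1 - z * (1 - l') ^ 2).inv
  have hfp : ∀ j, f (γ * lam j) = (1 - r j)⁻¹ := fun j => by simp [hf, hr]
  have hfb : ∀ j, f (γ * lam j) ≤ (1 - z)⁻¹ := fun j => by
    rw [hfp j]
    apply inv_anti₀ h1z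
    have := hrz j; linarith
  have hfpos : ∀ j, 0 ≤ f (γ * lam j) := fun j => by
    rw [hfp j]; exact (inv_pos.mpr (h1r j)).le
  have hwc : ∀ i, γ * lam i * (a i) ^ 2 / (2 * γ) = c i := fun i => by
    rw [hc]; field_simp
  have hint : Integrable f (Measure.sum (fun i =>
      (ENNReal.ofReal (γ * lam i * (a i) ^ 2 / (2 * γ))) • Measure.dirac (γ * lam i))) := by
    constructor
    · exact hfm.aestronglyMeasurable
    · rw [HasFiniteIntegral, lintegral_sum_measure]
      have hstep : ∀ i, ∫⁻ x, ‖f x‖ₑ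
          ∂((ENNReal.ofReal (γ * lam i * (a i) ^ 2 / (2 * γ))) • Measure.dirac (γ * lam i))
          = ENNReal.ofReal (c i) * ‖f (γ * lam i)‖ₑ := by
        intro i
        rw [lintegral_smul_measure, lintegral_dirac, hwc i, smul_eq_mul]
      rw [tsum_congr hstep]
      have hle : ∀ i, ENNReal.ofReal (c i) * ‖f (γ * lam i)‖ₑ
          ≤ ENNReal.ofReal (c i) * ENNReal.ofReal ((1 - z)⁻¹) := fun i => by
        apply mul_le_mul_right
        rw [Real.enorm_eq_ofReal (hfpos i)]
        exact ENNReal.ofReal_le_ofReal (hfb i)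
      refine lt_of_le_of_lt (ENNReal.tsum_le_tsum hle) ?_
      rw [ENNReal.tsum_mul_right, ← ENNReal.ofReal_tsum_of_nonneg hc0 hsc]
      exact ENNReal.mul_lt_top ENNReal.ofReal_lt_top ENNReal.ofReal_lt_top
  rw [hLHS]
  rw [integral_sum_measure hint]
  refine Eq.symm (tsum_congr fun i => ?_)
  rw [integral_smul_measure, integral_dirac, hwc i, ENNReal.toReal_ofReal (hc0 i),
    smul_eq_mul, hfp i]
end

section
/- Suppose σ is a finite measure on [0,1) whose Stieltjes transform S(u) = ∫₀¹ dσ(λ)/(λ+u) satisfies S^{(k-1)}(u) ~ c(-1)^{k-1}Γ(k-ω)Γ(ω)u^{ω-k} as u→0⁺ for all integers k > ω, where ω ∈ (0,1) and c > 0. Then the nonincreasing sequence a_k = ∫₀¹ (1-λ)^{2k} dσ(λ) satisfies a_k ~ c·Γ(ω)/(2k)^ω as k → ∞. -/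
open Filter Topology MeasureTheory

lemma aux_one_add_le_exp {y : ℝ} : 1 + y ≤ Real.exp y := by
  have := Real.add_one_le_exp y; linarith

lemma aux_exp_le_one_add {y : ℝ} (hy : 0 ≤ y) : Real.exp (y / (1 + y)) ≤ 1 + y := by
  have h1 : 0 < 1 + y := by linarith
  have h3 : 1 - y / (1 + y) = (1 + y)⁻¹ := by field_simp; ring
  have h2 : (1 + y)⁻¹ ≤ (Real.exp (y / (1 + y)))⁻¹ := by
    rw [← Real.exp_neg, ← h3]
    have := Real.add_one_le_exp (-(y / (1 + y))); linarith
  have h5 := inv_anti₀ (by positivity) h2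
  simpa using h5

lemma kernel_le_expx {x : ℝ} (hx : 0 ≤ x) {m : ℕ} (hm : 1 ≤ m) :
    (1 + x / m) ^ m ≤ Real.exp x := by
  have hm' : (0:ℝ) < m := by exact_mod_cast hm
  have h1 : 0 ≤ 1 + x / m := by positivity
  have h2 : 1 + x / m ≤ Real.exp (x / m) := aux_one_add_le_exp
  calc (1 + x / m) ^ m ≤ Real.exp (x / m) ^ m := pow_le_pow_left₀ h1 h2 m
    _ = Real.exp x := by rw [← Real.exp_nat_mul]; congr 1; field_simp

lemma expx_le_kernel {x : ℝ} (hx : 0 ≤ x) {m : ℕ} (hm : 1 ≤ m) :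
    Real.exp (x - x ^ 2 / m) ≤ (1 + x / m) ^ m := by
  have hm' : (0:ℝ) < m := by exact_mod_cast hm
  set y := x / m with hy
  have hy0 : 0 ≤ y := by positivity
  have h1p : (0:ℝ) < 1 + y := by linarith
  have key : Real.exp (y - y ^ 2) ≤ 1 + y := by
    have h1 : y - y ^ 2 ≤ y / (1 + y) := by
      rw [le_div_iff₀ h1p]; nlinarith
    calc Real.exp (y - y ^ 2) ≤ Real.exp (y / (1 + y)) := Real.exp_le_exp.2 h1
      _ ≤ 1 + y := aux_exp_le_one_add hy0
  calc Real.exp (x - x ^ 2 / m) = Real.exp (y - y ^ 2) ^ m := by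
        rw [← Real.exp_nat_mul]; congr 1; rw [hy]; field_simp
    _ ≤ (1 + y) ^ m := pow_le_pow_left₀ (Real.exp_nonneg _) key m

lemma exp_neg_le_kernel_inv {x : ℝ} (hx : 0 ≤ x) {m : ℕ} (hm : 1 ≤ m) :
    Real.exp (-x) ≤ ((1 + x / m) ^ m)⁻¹ := by
  have hm' : (0:ℝ) < m := by exact_mod_cast hm
  have hp : 0 < (1 + x / m) ^ m := by positivity
  rw [Real.exp_neg]
  exact inv_anti₀ hp (kernel_le_expx hx hm)

lemma kernel_inv_mul_le_exp_neg {x : ℝ} (hx : 0 ≤ x) {m : ℕ} (hm : 1 ≤ m) :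
    ((1 + x / m) ^ m)⁻¹ * (1 - x / Real.sqrt m) ≤ Real.exp (-x) := by
  have hm' : (0:ℝ) < m := by exact_mod_cast hm
  have hsq : 0 < Real.sqrt m := Real.sqrt_pos.2 hm'
  rcases le_or_gt x (Real.sqrt m) with hcase | hcase
  · set s := x / Real.sqrt m with hs
    have hs0 : 0 ≤ s := by positivity
    have hs1 : s ≤ 1 := by rw [hs, div_le_one hsq]; exact hcase
    have hx2 : x ^ 2 / m = s ^ 2 := by
      rw [hs, div_pow, Real.sq_sqrt hm'.le]
    have h1 : ((1 + x / m) ^ m)⁻¹ ≤ Real.exp (-x + s ^ 2) := by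
      have h2 := expx_le_kernel hx hm
      have := inv_anti₀ (Real.exp_pos (x - x ^ 2 / m)) h2
      rw [← Real.exp_neg] at this
      rw [show -x + s ^ 2 = -(x - x ^ 2 / m) by rw [hx2]; ring] at *
      exact this
    have h4 : 1 - s ≤ Real.exp (-s ^ 2) := by
      have h5 := Real.add_one_le_exp (-s ^ 2)
      nlinarith
    have h6 : 0 ≤ 1 - s := by linarith
    calc ((1 + x / m) ^ m)⁻¹ * (1 - x / Real.sqrt m)
        ≤ Real.exp (-x + s ^ 2) * (1 - s) := mul_le_mul_of_nonneg_right h1 h6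
      _ ≤ Real.exp (-x + s ^ 2) * Real.exp (-s ^ 2) :=
          mul_le_mul_of_nonneg_left h4 (Real.exp_nonneg _)
      _ = Real.exp (-x) := by rw [← Real.exp_add]; ring_nf
  · have hneg : 1 - x / Real.sqrt m < 0 := by
      rw [sub_neg, lt_div_iff₀ hsq]; linarith
    have hker : 0 ≤ ((1 + x / m) ^ m)⁻¹ := by positivity
    calc ((1 + x / m) ^ m)⁻¹ * (1 - x / Real.sqrt m) ≤ 0 :=
          mul_nonpos_of_nonneg_of_nonpos hker hneg.le
      _ ≤ Real.exp (-x) := (Real.exp_pos _).le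

lemma one_sub_pow_le {lam : ℝ} (h0 : 0 ≤ lam) (h1 : lam ≤ 1) (N : ℕ) :
    (1 - lam) ^ N ≤ Real.exp (-(N * lam)) := by
  have hb : 1 - lam ≤ Real.exp (-lam) := by
    have := Real.add_one_le_exp (-lam); linarith
  calc (1 - lam) ^ N ≤ Real.exp (-lam) ^ N := pow_le_pow_left₀ (by linarith) hb N
    _ = Real.exp (-(N * lam)) := by rw [← Real.exp_nat_mul]; ring_nf

lemma one_sub_pow_ge {lam : ℝ} (h0 : 0 ≤ lam) (h1 : lam < 1) (N : ℕ) :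
    Real.exp (-(N * lam)) * (1 - N * lam ^ 2) ≤ (1 - lam) ^ N := by
  have he : 1 + lam ≤ Real.exp lam := aux_one_add_le_exp
  have hmul : Real.exp (-lam) * Real.exp lam = 1 := by
    rw [← Real.exp_add]; simp
  have hexpos : 0 < Real.exp (-lam) := Real.exp_pos _
  have hbase : Real.exp (-lam) * (1 - lam ^ 2) ≤ 1 - lam := by
    have h2 : 1 - lam ^ 2 = (1 - lam) * (1 + lam) := by ring
    have h3 : (1 - lam) * (1 + lam) ≤ (1 - lam) * Real.exp lam :=
      mul_le_mul_of_nonneg_left he (by linarith)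
    calc Real.exp (-lam) * (1 - lam ^ 2) ≤ Real.exp (-lam) * ((1 - lam) * Real.exp lam) := by
          rw [h2]; exact mul_le_mul_of_nonneg_left h3 hexpos.le
      _ = 1 - lam := by rw [show Real.exp (-lam) * ((1 - lam) * Real.exp lam)
            = (1 - lam) * (Real.exp (-lam) * Real.exp lam) by ring, hmul, mul_one]
  have hbase0 : 0 ≤ Real.exp (-lam) * (1 - lam ^ 2) := by nlinarith
  have hpow : (Real.exp (-lam) * (1 - lam ^ 2)) ^ N ≤ (1 - lam) ^ N :=
    pow_le_pow_left₀ hbase0 hbase N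
  have hexpand : (Real.exp (-lam) * (1 - lam ^ 2)) ^ N
      = Real.exp (-(N * lam)) * (1 - lam ^ 2) ^ N := by
    rw [mul_pow, ← Real.exp_nat_mul]; ring_nf
  have hbern : 1 - N * lam ^ 2 ≤ (1 - lam ^ 2) ^ N := by
    have h := one_add_mul_le_pow (a := -lam ^ 2) (by nlinarith) N
    calc 1 - N * lam ^ 2 = 1 + N * (-lam ^ 2) := by ring
      _ ≤ (1 + -lam ^ 2) ^ N := h
      _ = (1 - lam ^ 2) ^ N := by ring_nf
  calc Real.exp (-(N * lam)) * (1 - N * lam ^ 2)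
      ≤ Real.exp (-(N * lam)) * (1 - lam ^ 2) ^ N :=
        mul_le_mul_of_nonneg_left hbern (Real.exp_nonneg _)
    _ = (Real.exp (-lam) * (1 - lam ^ 2)) ^ N := hexpand.symm
    _ ≤ (1 - lam) ^ N := hpow

lemma sq_mul_exp_le {x : ℝ} (hx : 0 ≤ x) :
    x ^ 2 * Real.exp (-x) ≤ 9 * (((1 + x / 3) ^ 1)⁻¹) := by
  have hp : (0:ℝ) < 1 + x / 3 := by positivity
  have h1 : x ^ 2 * Real.exp (-x) ≤ x ^ 2 * ((1 + x / 3) ^ 3)⁻¹ :=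
    mul_le_mul_of_nonneg_left (exp_neg_le_kernel_inv hx (by norm_num)) (sq_nonneg x)
  have h2 : x ^ 2 * ((1 + x / 3) ^ 3)⁻¹ ≤ 9 * (((1 + x / 3) ^ 1)⁻¹) := by
    rw [pow_one, ← div_eq_mul_inv, ← div_eq_mul_inv,
      div_le_div_iff₀ (by positivity) hp]
    nlinarith [sq_nonneg x, hx]
  linarith

lemma kernel_eq {u : ℝ} (hu : u ≠ 0) (lam : ℝ) (m : ℕ) :
    u ^ m * ((lam + u) ^ m)⁻¹ = ((1 + lam / u) ^ m)⁻¹ := by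
  have h : 1 + lam / u = (lam + u) / u := by
    rw [add_div, div_self hu, add_comm]
  rw [h, div_pow, inv_div, div_eq_mul_inv]

lemma kernel_split {x : ℝ} {M : ℕ} (hM : 1 ≤ M) (hp : (0:ℝ) < 1 + x / M) :
    (1 + x) * ((1 + x / M) ^ M)⁻¹
      = (1 - (M:ℝ)) * ((1 + x / M) ^ M)⁻¹ + (M:ℝ) * ((1 + x / M) ^ (M - 1))⁻¹ := by
  have hM' : (0:ℝ) < M := by exact_mod_cast hM
  set p := 1 + x / (M:ℝ) with hpdef
  have hM1 : M - 1 + 1 = M := Nat.succ_pred_eq_of_pos hM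
  have hMM : p ^ M = p ^ (M - 1) * p := by rw [← pow_succ, hM1]
  have h2 : (p ^ (M - 1))⁻¹ = p * (p ^ M)⁻¹ := by
    rw [hMM, mul_inv, ← mul_assoc, mul_comm p ((p ^ (M - 1))⁻¹), mul_assoc,
      mul_inv_cancel₀ hp.ne', mul_one]
  have hMp : (M:ℝ) * p = M + x := by rw [hpdef]; field_simp
  rw [h2]
  linear_combination (-((p ^ M)⁻¹)) * hMp

lemma ae_mem_Ico (σ : Measure ℝ) (hsupp : σ (Set.Ico (0:ℝ) 1)ᶜ = 0) :
    ∀ᵐ lam ∂σ, lam ∈ Set.Ico (0:ℝ) 1 := by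
  rw [ae_iff]
  convert hsupp using 2
  rfl

lemma integrable_kernel (σ : Measure ℝ) [IsFiniteMeasure σ]
    (hsupp : σ (Set.Ico (0:ℝ) 1)ᶜ = 0) {u : ℝ} (hu : 0 < u) (m : ℕ) :
    Integrable (fun lam => ((lam + u) ^ m)⁻¹) σ := by
  refine Integrable.mono' (integrable_const ((u ^ m)⁻¹)) ?_ ?_
  · exact (((measurable_id.add_const u).pow_const m).inv).aestronglyMeasurable
  · filter_upwards [ae_mem_Ico σ hsupp] with lam hlam
    have h0 : 0 ≤ lam := hlam.1
    have hpos : 0 < lam + u := by linarith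
    have h1 : u ^ m ≤ (lam + u) ^ m := pow_le_pow_left₀ hu.le (by linarith) m
    rw [Real.norm_eq_abs, abs_of_nonneg (by positivity)]
    exact inv_anti₀ (by positivity) h1

lemma integrable_onesub (σ : Measure ℝ) [IsFiniteMeasure σ]
    (hsupp : σ (Set.Ico (0:ℝ) 1)ᶜ = 0) (N : ℕ) :
    Integrable (fun lam => (1 - lam) ^ N) σ := by
  refine Integrable.mono' (integrable_const 1) ?_ ?_
  · exact ((measurable_const.sub measurable_id).pow_const N).aestronglyMeasurable
  · filter_upwards [ae_mem_Ico σ hsupp] with lam hlam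
    rw [Real.norm_eq_abs, abs_of_nonneg (pow_nonneg (by linarith [hlam.2]) N)]
    calc (1 - lam) ^ N ≤ 1 ^ N := pow_le_pow_left₀ (by linarith [hlam.2]) (by linarith [hlam.1]) N
      _ = 1 := one_pow N

lemma hasDerivAt_P (σ : Measure ℝ) [IsFiniteMeasure σ]
    (hsupp : σ (Set.Ico (0:ℝ) 1)ᶜ = 0) (m : ℕ) {u : ℝ} (hu : 0 < u) :
    HasDerivAt (fun v => ∫ lam, ((lam + v) ^ (m + 1))⁻¹ ∂σ)
      (-((m:ℝ) + 1) * ∫ lam, ((lam + u) ^ (m + 2))⁻¹ ∂σ) u := by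
  have hε : 0 < u / 2 := by linarith
  have key := hasDerivAt_integral_of_dominated_loc_of_deriv_le (μ := σ)
    (F := fun v lam => ((lam + v) ^ (m + 1))⁻¹)
    (F' := fun v lam => -((m:ℝ) + 1) * ((lam + v) ^ (m + 2))⁻¹)
    (x₀ := u) (bound := fun _ => ((m:ℝ) + 1) * (((u / 2) ^ (m + 2))⁻¹)) (Metric.ball_mem_nhds u hε)
    ?_ ?_ ?_ ?_ ?_ ?_
  · have := key.2
    rwa [integral_const_mul] at this
  · exact Eventually.of_forall fun x =>
      (((measurable_id.add_const x).pow_const (m + 1)).inv).aestronglyMeasurable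
  · exact integrable_kernel σ hsupp hu (m + 1)
  · exact ((((measurable_id.add_const u).pow_const (m + 2)).inv).const_mul _).aestronglyMeasurable
  · filter_upwards [ae_mem_Ico σ hsupp] with lam hlam x hx
    have hxu : u / 2 < x := by
      have := abs_sub_lt_iff.1 (mem_ball_iff_norm.1 hx)
      linarith [this.2]
    have hpos : 0 < lam + x := by linarith [hlam.1]
    have h1 : (u / 2) ^ (m + 2) ≤ (lam + x) ^ (m + 2) :=
      pow_le_pow_left₀ hε.le (by linarith [hlam.1]) _
    rw [norm_mul, Real.norm_eq_abs, Real.norm_eq_abs, abs_of_nonpos (neg_nonpos.mpr (by positivity)),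
      abs_of_nonneg (by positivity)]
    have h2 : ((lam + x) ^ (m + 2))⁻¹ ≤ ((u / 2) ^ (m + 2))⁻¹ :=
      inv_anti₀ (by positivity) h1
    have h3 : (0:ℝ) ≤ (m:ℝ) + 1 := by positivity
    calc -(-((m:ℝ) + 1)) * ((lam + x) ^ (m + 2))⁻¹ = ((m:ℝ) + 1) * ((lam + x) ^ (m + 2))⁻¹ := by ring
      _ ≤ ((m:ℝ) + 1) * ((u / 2) ^ (m + 2))⁻¹ := mul_le_mul_of_nonneg_left h2 h3
  · exact integrable_const _
  · filter_upwards [ae_mem_Ico σ hsupp] with lam hlam x hx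
    have hxu : u / 2 < x := by
      have := abs_sub_lt_iff.1 (mem_ball_iff_norm.1 hx)
      linarith [this.2]
    have hpos : 0 < lam + x := by linarith [hlam.1]
    have hd : HasDerivAt (fun y : ℝ => lam + y) 1 x := (hasDerivAt_id x).const_add lam
    have hz := (hasDerivAt_zpow (-(((m:ℕ) + 1) : ℤ)) (lam + x) (Or.inl hpos.ne')).comp x hd
    have hfun : (fun y : ℝ => (lam + y) ^ (-(((m:ℕ) + 1) : ℤ))) =
        fun y : ℝ => ((lam + y) ^ (m + 1))⁻¹ := by
      funext y
      rw [zpow_neg, show ((m:ℤ) + 1) = ((m + 1 : ℕ) : ℤ) by push_cast; ring, zpow_natCast]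
    simp only [Function.comp_def] at hz
    rw [hfun] at hz
    refine hz.congr_deriv ?_
    rw [show (-((m:ℤ) + 1)) - 1 = -(((m + 2 : ℕ)) : ℤ) by push_cast; ring, zpow_neg, zpow_natCast]
    push_cast
    ring

lemma iteratedDeriv_S (σ : Measure ℝ) [IsFiniteMeasure σ]
    (hsupp : σ (Set.Ico (0:ℝ) 1)ᶜ = 0) (S : ℝ → ℝ)
    (hS : ∀ u : ℝ, 0 < u → S u = ∫ lam, (lam + u)⁻¹ ∂σ) :
    ∀ m : ℕ, ∀ u : ℝ, 0 < u →
      iteratedDeriv m S u = (-1) ^ m * (Nat.factorial m) * ∫ lam, ((lam + u) ^ (m + 1))⁻¹ ∂σ := by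
  intro m
  induction m with
  | zero =>
    intro u hu
    rw [iteratedDeriv_zero, hS u hu]
    simp [pow_one]
  | succ m ih =>
    intro u hu
    rw [iteratedDeriv_succ]
    have heq : (iteratedDeriv m S) =ᶠ[𝓝 u]
        (fun v => (-1) ^ m * (Nat.factorial m : ℝ) * ∫ lam, ((lam + v) ^ (m + 1))⁻¹ ∂σ) := by
      filter_upwards [IsOpen.mem_nhds isOpen_Ioi hu] with v hv using ih v hv
    rw [heq.deriv_eq]
    have hd := (hasDerivAt_P σ hsupp m hu).const_mul ((-1:ℝ) ^ m * (Nat.factorial m : ℝ))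
    rw [hd.deriv]
    rw [Nat.factorial_succ]
    push_cast
    ring

section
variable (σ : Measure ℝ) [IsFiniteMeasure σ] (hsupp : σ (Set.Ico (0:ℝ) 1)ᶜ = 0)
  (ω c : ℝ) (hω : ω ∈ Set.Ioo (0:ℝ) 1) (hc : 0 < c)
  (S : ℝ → ℝ) (hS : ∀ u : ℝ, 0 < u → S u = ∫ lam, (lam + u)⁻¹ ∂σ)
  (hderiv : ∀ k : ℕ, ω < k →
      Tendsto (fun u : ℝ =>
          iteratedDeriv (k - 1) S u /
            (c * (-1 : ℝ) ^ (k - 1) * Real.Gamma (k - ω) * Real.Gamma ω *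
              u ^ (ω - k)))
        (nhdsWithin 0 (Set.Ioi 0)) (nhds 1))

include hsupp hω hc hS hderiv

lemma tendsto_P_mul (m : ℕ) (hm : 1 ≤ m) :
    Tendsto (fun u : ℝ => (∫ lam, ((lam + u) ^ m)⁻¹ ∂σ) * u ^ ((m:ℝ) - ω))
      (𝓝[>] (0:ℝ))
      (𝓝 (c * Real.Gamma ((m:ℝ) - ω) * Real.Gamma ω / (Nat.factorial (m - 1)))) := by
  have hωm : ω < m := lt_of_lt_of_le hω.2 (by exact_mod_cast hm)
  have htends := hderiv m hωm
  have hΓ1 : 0 < Real.Gamma ((m:ℝ) - ω) := Real.Gamma_pos_of_pos (by linarith)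
  have hΓ2 : 0 < Real.Gamma ω := Real.Gamma_pos_of_pos hω.1
  have hfact : (0:ℝ) < (Nat.factorial (m - 1) : ℝ) := by
    exact_mod_cast Nat.factorial_pos (m - 1)
  have hpm1 : ((-1:ℝ)) ^ (m - 1) ≠ 0 := pow_ne_zero _ (by norm_num)
  have hmain := htends.mul_const
    ((c * Real.Gamma ((m:ℝ) - ω) * Real.Gamma ω) / (Nat.factorial (m - 1) : ℝ))
  rw [one_mul] at hmain
  apply hmain.congr'
  filter_upwards [eventually_mem_nhdsWithin] with u (hu : u ∈ Set.Ioi (0:ℝ))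
  have hup : (0:ℝ) < u := hu
  have hD : (0:ℝ) < u ^ (ω - (m:ℝ)) := Real.rpow_pos_of_pos hup _
  have hDmul : u ^ (ω - (m:ℝ)) * u ^ ((m:ℝ) - ω) = 1 := by
    rw [← Real.rpow_add hup]
    norm_num
  have hiter := iteratedDeriv_S σ hsupp S hS (m - 1) u hup
  have hm1 : m - 1 + 1 = m := Nat.succ_pred_eq_of_pos hm
  rw [hm1] at hiter
  rw [hiter]
  set P := ∫ lam, ((lam + u) ^ m)⁻¹ ∂σ
  have hne : (c * (-1:ℝ) ^ (m - 1) * Real.Gamma ((m:ℝ) - ω) * Real.Gamma ω * u ^ (ω - (m:ℝ)))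
      * (Nat.factorial (m - 1) : ℝ) ≠ 0 :=
    mul_ne_zero (mul_ne_zero (mul_ne_zero (mul_ne_zero (mul_ne_zero hc.ne' hpm1) hΓ1.ne')
      hΓ2.ne') hD.ne') hfact.ne'
  rw [div_mul_div_comm, div_eq_iff hne]
  linear_combination (-(c * Real.Gamma ((m:ℝ) - ω) * Real.Gamma ω * ((-1:ℝ)) ^ (m - 1)
    * (Nat.factorial (m - 1) : ℝ) * P)) * hDmul
lemma tendsto_F (m : ℕ) (hm : 1 ≤ m) {t : ℝ} (ht : 0 < t) :
    Tendsto (fun n : ℕ => (2 * n : ℝ) ^ ω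
        * ∫ lam, (t / (2 * n)) ^ m * ((lam + t / (2 * n)) ^ m)⁻¹ ∂σ) atTop
      (𝓝 (t ^ ω * (c * Real.Gamma ((m:ℝ) - ω) * Real.Gamma ω / (Nat.factorial (m - 1))))) := by
  have hu : Tendsto (fun n : ℕ => t / (2 * n)) atTop (𝓝[>] (0:ℝ)) := by
    rw [tendsto_nhdsWithin_iff]
    constructor
    · have heq : (fun n : ℕ => t / (2 * n)) = fun n : ℕ => (t / 2) / n := by
        funext n; rw [div_div]
      rw [heq]
      exact tendsto_const_div_atTop_nhds_zero_nat (t / 2)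
    · filter_upwards [eventually_ge_atTop 1] with n hn
      have hn' : (0:ℝ) < n := by exact_mod_cast hn
      exact Set.mem_Ioi.2 (by positivity)
  have hcomp := (tendsto_P_mul σ hsupp ω c hω hc S hS hderiv m hm).comp hu
  have hmain := hcomp.const_mul (t ^ ω)
  apply hmain.congr'
  filter_upwards [eventually_ge_atTop 1] with n hn
  have hn' : (0:ℝ) < n := by exact_mod_cast hn
  have h2n : (0:ℝ) < 2 * n := by linarith
  set u := t / (2 * (n:ℝ)) with hudef
  have hup : 0 < u := by positivity
  simp only [Function.comp]
  rw [integral_const_mul]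
  have hmix : (2 * (n:ℝ)) ^ ω * u ^ (m:ℕ) = t ^ ω * u ^ ((m:ℝ) - ω) := by
    rw [← Real.rpow_natCast u m, show (m:ℝ) = ((m:ℝ) - ω) + ω by ring,
      Real.rpow_add hup,
      show (2 * (n:ℝ)) ^ ω * (u ^ ((m:ℝ) - ω) * u ^ ω)
        = ((2 * (n:ℝ)) ^ ω * u ^ ω) * u ^ ((m:ℝ) - ω) by ring,
      ← Real.mul_rpow h2n.le hup.le,
      show (2 * (n:ℝ)) * u = t by rw [hudef]; field_simp]
    ring
  set P := ∫ lam, ((lam + u) ^ m)⁻¹ ∂σ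
  calc t ^ ω * (P * u ^ ((m:ℝ) - ω)) = (t ^ ω * u ^ ((m:ℝ) - ω)) * P := by ring
    _ = ((2 * (n:ℝ)) ^ ω * u ^ (m:ℕ)) * P := by rw [hmix]
    _ = (2 * (n:ℝ)) ^ ω * (u ^ (m:ℕ) * P) := by ring
end

lemma gamma_convex_le {x s : ℝ} (hx : 0 < x) (hs0 : 0 ≤ s) (hs1 : s ≤ 1) :
    Real.Gamma (x + s) ≤ Real.Gamma x * x ^ s := by
  have hΓx : 0 < Real.Gamma x := Real.Gamma_pos_of_pos hx
  have hΓx1 : 0 < Real.Gamma (x + 1) := Real.Gamma_pos_of_pos (by linarith)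
  have hΓxs : 0 < Real.Gamma (x + s) := Real.Gamma_pos_of_pos (by linarith)
  have hconv := Real.convexOn_log_Gamma.2 (Set.mem_Ioi.2 hx)
    (Set.mem_Ioi.2 (show (0:ℝ) < x + 1 by linarith)) (by linarith : (0:ℝ) ≤ 1 - s) hs0
    (by ring)
  simp only [smul_eq_mul, Function.comp_apply] at hconv
  have harg : (1 - s) * x + s * (x + 1) = x + s := by ring
  rw [harg] at hconv
  have h2 : Real.Gamma (x + s) ≤ Real.Gamma x ^ (1 - s) * Real.Gamma (x + 1) ^ s := by
    calc Real.Gamma (x + s) = Real.exp (Real.log (Real.Gamma (x + s))) :=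
          (Real.exp_log hΓxs).symm
      _ ≤ Real.exp ((1 - s) * Real.log (Real.Gamma x) + s * Real.log (Real.Gamma (x + 1))) :=
          Real.exp_le_exp.2 hconv
      _ = Real.Gamma x ^ (1 - s) * Real.Gamma (x + 1) ^ s := by
          rw [Real.exp_add, mul_comm ((1:ℝ) - s), mul_comm s, Real.exp_mul, Real.exp_mul,
            Real.exp_log hΓx, Real.exp_log hΓx1]
  rw [Real.Gamma_add_one hx.ne'] at h2
  calc Real.Gamma (x + s) ≤ Real.Gamma x ^ (1 - s) * (x * Real.Gamma x) ^ s := h2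
    _ = Real.Gamma x ^ (1 - s) * (x ^ s * Real.Gamma x ^ s) := by
        rw [Real.mul_rpow hx.le hΓx.le]
    _ = (Real.Gamma x ^ (1 - s) * Real.Gamma x ^ s) * x ^ s := by ring
    _ = Real.Gamma x * x ^ s := by
        rw [← Real.rpow_add hΓx]
        norm_num

lemma gamma_convex_ge {x s : ℝ} (hx : 0 < x) (hs0 : 0 ≤ s) (hs1 : s ≤ 1) :
    x * Real.Gamma x * (x + s) ^ (s - 1) ≤ Real.Gamma (x + s) := by
  have hΓx : 0 < Real.Gamma x := Real.Gamma_pos_of_pos hx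
  have hxs : 0 < x + s := by linarith
  have hΓxs : 0 < Real.Gamma (x + s) := Real.Gamma_pos_of_pos hxs
  have hΓxs1 : 0 < Real.Gamma (x + s + 1) := Real.Gamma_pos_of_pos (by linarith)
  have hconv := Real.convexOn_log_Gamma.2 (Set.mem_Ioi.2 hxs)
    (Set.mem_Ioi.2 (show (0:ℝ) < x + s + 1 by linarith)) hs0 (by linarith : (0:ℝ) ≤ 1 - s)
    (by ring)
  simp only [smul_eq_mul, Function.comp_apply] at hconv
  have harg : s * (x + s) + (1 - s) * (x + s + 1) = x + 1 := by ring
  rw [harg] at hconv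
  have h2 : Real.Gamma (x + 1) ≤ Real.Gamma (x + s) ^ s * Real.Gamma (x + s + 1) ^ (1 - s) := by
    calc Real.Gamma (x + 1) = Real.exp (Real.log (Real.Gamma (x + 1))) :=
          (Real.exp_log (Real.Gamma_pos_of_pos (by linarith))).symm
      _ ≤ Real.exp (s * Real.log (Real.Gamma (x + s)) + (1 - s) * Real.log (Real.Gamma (x + s + 1))) :=
          Real.exp_le_exp.2 hconv
      _ = Real.Gamma (x + s) ^ s * Real.Gamma (x + s + 1) ^ (1 - s) := by
          rw [Real.exp_add, mul_comm s, mul_comm ((1:ℝ) - s), Real.exp_mul, Real.exp_mul,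
            Real.exp_log hΓxs, Real.exp_log hΓxs1]
  rw [Real.Gamma_add_one hx.ne', Real.Gamma_add_one hxs.ne'] at h2
  have h3 : x * Real.Gamma x ≤ Real.Gamma (x + s) * (x + s) ^ (1 - s) := by
    calc x * Real.Gamma x ≤ Real.Gamma (x + s) ^ s * ((x + s) * Real.Gamma (x + s)) ^ (1 - s) := h2
      _ = Real.Gamma (x + s) ^ s * ((x + s) ^ (1 - s) * Real.Gamma (x + s) ^ (1 - s)) := by
          rw [Real.mul_rpow hxs.le hΓxs.le]
      _ = (Real.Gamma (x + s) ^ s * Real.Gamma (x + s) ^ (1 - s)) * (x + s) ^ (1 - s) := by ring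
      _ = Real.Gamma (x + s) * (x + s) ^ (1 - s) := by
          rw [← Real.rpow_add hΓxs]; norm_num
  have h4 := mul_le_mul_of_nonneg_right h3 (Real.rpow_nonneg hxs.le (s - 1))
  calc x * Real.Gamma x * (x + s) ^ (s - 1) ≤
        Real.Gamma (x + s) * (x + s) ^ (1 - s) * (x + s) ^ (s - 1) := h4
    _ = Real.Gamma (x + s) := by
        rw [mul_assoc, ← Real.rpow_add hxs]
        norm_num

lemma tendsto_div_sub (s : ℝ) : Tendsto (fun x : ℝ => x / (x - s)) atTop (𝓝 1) := by
  have h1 : Tendsto (fun x : ℝ => x - s) atTop atTop := by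
    simpa [sub_eq_add_neg] using tendsto_atTop_add_const_right atTop (-s) tendsto_id
  have h2 : Tendsto (fun x : ℝ => s / (x - s)) atTop (𝓝 0) :=
    Tendsto.div_atTop tendsto_const_nhds h1
  have h3 : Tendsto (fun x : ℝ => 1 + s / (x - s)) atTop (𝓝 1) := by
    simpa using tendsto_const_nhds.add h2
  apply h3.congr'
  filter_upwards [eventually_gt_atTop (s + 1)] with x hx
  have hxs : x - s ≠ 0 := by linarith
  field_simp; ring

lemma tendsto_rpow_of_tendsto_one {f : ℕ → ℝ} (ω : ℝ)
    (h : Tendsto f atTop (𝓝 1)) : Tendsto (fun n => (f n) ^ ω) atTop (𝓝 1) := by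
  have hc := (Real.continuousAt_rpow_const 1 ω (Or.inl one_ne_zero)).tendsto.comp h
  simpa [Function.comp_def] using hc

lemma tendsto_Rr {ω : ℝ} (hω : ω ∈ Set.Ioo (0:ℝ) 1) :
    Tendsto (fun x : ℝ => Real.Gamma (x - ω) * x ^ ω / Real.Gamma x) atTop (𝓝 1) := by
  have hlow : Tendsto (fun x : ℝ => (x / (x - ω)) ^ ω) atTop (𝓝 1) := by
    have hc := (Real.continuousAt_rpow_const 1 ω (Or.inl one_ne_zero)).tendsto.comp
      (tendsto_div_sub ω)
    simpa [Function.comp_def] using hc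
  have hup : Tendsto (fun x : ℝ => x / (x - ω)) atTop (𝓝 1) := tendsto_div_sub ω
  apply tendsto_of_tendsto_of_tendsto_of_le_of_le' hlow hup
  · -- (x/(x-ω))^ω ≤ Rr x
    filter_upwards [eventually_gt_atTop 2] with x hx
    have hxω : 0 < x - ω := by
      have := hω.2; linarith
    have hx0 : (0:ℝ) < x := by linarith [hω.1, hω.2]
    have hΓ : 0 < Real.Gamma (x - ω) := Real.Gamma_pos_of_pos hxω
    have hkey := gamma_convex_le hxω hω.1.le hω.2.le
    rw [sub_add_cancel] at hkey
    -- hkey : Γ x ≤ Γ (x - ω) * (x - ω) ^ ω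
    have h1 : Real.Gamma (x - ω) * x ^ ω / (Real.Gamma (x - ω) * (x - ω) ^ ω)
        ≤ Real.Gamma (x - ω) * x ^ ω / Real.Gamma x :=
      div_le_div_of_nonneg_left (by positivity) (Real.Gamma_pos_of_pos hx0) hkey
    calc (x / (x - ω)) ^ ω = x ^ ω / (x - ω) ^ ω := Real.div_rpow hx0.le hxω.le ω
      _ = Real.Gamma (x - ω) * x ^ ω / (Real.Gamma (x - ω) * (x - ω) ^ ω) := by
          rw [mul_div_mul_left _ _ hΓ.ne']
      _ ≤ _ := h1
  · -- Rr x ≤ x/(x-ω)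
    filter_upwards [eventually_gt_atTop 2] with x hx
    have hxω : 0 < x - ω := by have := hω.2; linarith
    have hx0 : (0:ℝ) < x := by linarith [hω.1, hω.2]
    have hΓ : 0 < Real.Gamma (x - ω) := Real.Gamma_pos_of_pos hxω
    have hkey := gamma_convex_ge hxω hω.1.le hω.2.le
    rw [sub_add_cancel] at hkey
    -- hkey : (x-ω) * Γ(x-ω) * x ^ (ω - 1) ≤ Γ x
    have hpos : 0 < (x - ω) * Real.Gamma (x - ω) * x ^ (ω - 1) := by positivity
    have h1 : Real.Gamma (x - ω) * x ^ ω / Real.Gamma x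
        ≤ Real.Gamma (x - ω) * x ^ ω / ((x - ω) * Real.Gamma (x - ω) * x ^ (ω - 1)) :=
      div_le_div_of_nonneg_left (by positivity) hpos hkey
    have hsplit : x ^ ω = x ^ (ω - 1) * x := by
      rw [← Real.rpow_add_one hx0.ne' (ω - 1)]; ring_nf
    have h2 : Real.Gamma (x - ω) * x ^ ω / ((x - ω) * Real.Gamma (x - ω) * x ^ (ω - 1))
        = x / (x - ω) := by
      rw [hsplit]
      have hxp : (0:ℝ) < x ^ (ω - 1) := Real.rpow_pos_of_pos hx0 _
      field_simp
    rw [h2] at h1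
    exact h1

noncomputable def FF (σ : Measure ℝ) (ω : ℝ) (m : ℕ) (t : ℝ) (n : ℕ) : ℝ :=
  (2 * n : ℝ) ^ ω * ∫ lam, (t / (2 * n)) ^ m * ((lam + t / (2 * n)) ^ m)⁻¹ ∂σ

lemma sandwich (σ : Measure ℝ) [IsFiniteMeasure σ] (hsupp : σ (Set.Ico (0:ℝ) 1)ᶜ = 0)
    (ω : ℝ) {M n : ℕ} (hM : 3 ≤ M) (hn : 1 ≤ n) :
    (2 * n : ℝ) ^ ω * ∫ lam, (1 - lam) ^ (2 * n) ∂σ ≤ FF σ ω M (M:ℝ) n ∧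
    FF σ ω M (M:ℝ) n
        - (Real.sqrt M)⁻¹ * ((1 - (M:ℝ)) * FF σ ω M (M:ℝ) n
            + (M:ℝ) * FF σ ω (M - 1) (M:ℝ) n)
        - 9 / (2 * n) * FF σ ω 1 3 n
      ≤ (2 * n : ℝ) ^ ω * ∫ lam, (1 - lam) ^ (2 * n) ∂σ := by
  have hn' : (0:ℝ) < n := by exact_mod_cast hn
  have h2n : (0:ℝ) < 2 * n := by linarith
  have hM1 : 1 ≤ M := by omega
  have hMr : (0:ℝ) < M := by exact_mod_cast (by omega : 0 < M)
  have hrw : (0:ℝ) ≤ (2 * n : ℝ) ^ ω := Real.rpow_nonneg h2n.le ω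
  set u1 : ℝ := (M:ℝ) / (2 * n) with hu1def
  set u2 : ℝ := (3:ℝ) / (2 * n) with hu2def
  have hu1 : 0 < u1 := by rw [hu1def]; positivity
  have hu2 : 0 < u2 := by rw [hu2def]; positivity
  set K1 : ℝ → ℝ := fun lam => u1 ^ M * ((lam + u1) ^ M)⁻¹ with hK1def
  set K2 : ℝ → ℝ := fun lam => u1 ^ (M - 1) * ((lam + u1) ^ (M - 1))⁻¹ with hK2def
  set K3 : ℝ → ℝ := fun lam => u2 ^ 1 * ((lam + u2) ^ 1)⁻¹ with hK3def
  have int1 : Integrable K1 σ := (integrable_kernel σ hsupp hu1 M).const_mul _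
  have int2 : Integrable K2 σ := (integrable_kernel σ hsupp hu1 (M - 1)).const_mul _
  have int3 : Integrable K3 σ := (integrable_kernel σ hsupp hu2 1).const_mul _
  have int0 : Integrable (fun lam => (1 - lam) ^ (2 * n)) σ := integrable_onesub σ hsupp (2 * n)
  set s : ℝ := (Real.sqrt M)⁻¹ with hsdef
  set r : ℝ := 9 / (2 * (n:ℝ)) with hrdef
  have intMid : Integrable (fun lam => (1 - (M:ℝ)) * K1 lam + (M:ℝ) * K2 lam) σ :=
    (int1.const_mul _).add (int2.const_mul _)
  have intLow : Integrable
      (fun lam => K1 lam - s * ((1 - (M:ℝ)) * K1 lam + (M:ℝ) * K2 lam) - r * K3 lam) σ :=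
    (int1.sub (intMid.const_mul s)).sub (int3.const_mul r)
  -- pointwise inequalities
  have hpt : ∀ lam ∈ Set.Ico (0:ℝ) 1,
      (1 - lam) ^ (2 * n) ≤ K1 lam ∧
      K1 lam - s * ((1 - (M:ℝ)) * K1 lam + (M:ℝ) * K2 lam) - r * K3 lam
        ≤ (1 - lam) ^ (2 * n) := by
    rintro lam ⟨hl0, hl1⟩
    set x : ℝ := 2 * (n:ℝ) * lam with hxdef
    have hx0 : 0 ≤ x := by rw [hxdef]; positivity
    have hl1' : lam < 1 := hl1
    have hdiv1 : lam / u1 = x / (M:ℝ) := by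
      rw [hu1def, hxdef]; field_simp
    have hdiv2 : lam / u2 = x / 3 := by
      rw [hu2def, hxdef]; field_simp
    have k1 : K1 lam = ((1 + x / (M:ℝ)) ^ M)⁻¹ := by
      rw [hK1def]; dsimp only; rw [kernel_eq hu1.ne' lam M, hdiv1]
    have k2 : K2 lam = ((1 + x / (M:ℝ)) ^ (M - 1))⁻¹ := by
      rw [hK2def]; dsimp only; rw [kernel_eq hu1.ne' lam (M - 1), hdiv1]
    have k3 : K3 lam = ((1 + x / 3) ^ 1)⁻¹ := by
      rw [hK3def]; dsimp only; rw [kernel_eq hu2.ne' lam 1, hdiv2]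
    have hcast : ((2 * n : ℕ) : ℝ) = 2 * (n:ℝ) := by push_cast; ring
    have s4 : (1 - lam) ^ (2 * n) ≤ Real.exp (-x) := by
      have := one_sub_pow_le hl0 hl1'.le (2 * n)
      rwa [hcast, ← hxdef] at this
    have s1 : Real.exp (-x) ≤ ((1 + x / (M:ℝ)) ^ M)⁻¹ := exp_neg_le_kernel_inv hx0 hM1
    constructor
    · rw [k1]; exact s4.trans s1
    · have A1 : Real.exp (-x) * (1 - 2 * (n:ℝ) * lam ^ 2) ≤ (1 - lam) ^ (2 * n) := by
        have := one_sub_pow_ge hl0 hl1' (2 * n)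
        rwa [hcast, ← hxdef] at this
      have A1' : Real.exp (-x) - Real.exp (-x) * (2 * (n:ℝ) * lam ^ 2)
          ≤ (1 - lam) ^ (2 * n) := by
        rw [mul_sub, mul_one] at A1; linarith
      have A2 : ((1 + x / (M:ℝ)) ^ M)⁻¹ * (1 - x / Real.sqrt M) ≤ Real.exp (-x) :=
        kernel_inv_mul_le_exp_neg hx0 hM1
      have A3 : x ^ 2 * Real.exp (-x) ≤ 9 * (((1 + x / 3) ^ 1)⁻¹) := sq_mul_exp_le hx0
      have hp : (0:ℝ) < 1 + x / M := by positivity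
      have split := kernel_split hM1 hp
      have hsM : (0:ℝ) < Real.sqrt M := Real.sqrt_pos.2 hMr
      have hK : (0:ℝ) ≤ ((1 + x / (M:ℝ)) ^ M)⁻¹ := by positivity
      have hK3 : (0:ℝ) ≤ ((1 + x / 3) ^ 1)⁻¹ := by positivity
      -- lower chain
      have f1 : K1 lam - s * ((1 - (M:ℝ)) * K1 lam + (M:ℝ) * K2 lam)
          = ((1 + x / (M:ℝ)) ^ M)⁻¹ * (1 - (1 + x) * s) := by
        rw [k1, k2, ← split]; ring
      have f2 : ((1 + x / (M:ℝ)) ^ M)⁻¹ * (1 - (1 + x) * s)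
          ≤ ((1 + x / (M:ℝ)) ^ M)⁻¹ * (1 - x / Real.sqrt M) := by
        apply mul_le_mul_of_nonneg_left _ hK
        have hxs : x / Real.sqrt M ≤ (1 + x) * s := by
          rw [hsdef, div_eq_mul_inv]
          have : (0:ℝ) ≤ (Real.sqrt (M:ℝ))⁻¹ := by positivity
          nlinarith
        linarith
      have hxsq : Real.exp (-x) * (2 * (n:ℝ) * lam ^ 2) = x ^ 2 * Real.exp (-x) / (2 * (n:ℝ)) := by
        rw [hxdef]; field_simp
      have f3 : Real.exp (-x) * (2 * (n:ℝ) * lam ^ 2) ≤ r * K3 lam := by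
        rw [hxsq, k3, hrdef]
        have h := mul_le_mul_of_nonneg_right A3 (inv_nonneg.2 h2n.le)
        calc x ^ 2 * Real.exp (-x) / (2 * (n:ℝ))
            = x ^ 2 * Real.exp (-x) * (2 * (n:ℝ))⁻¹ := div_eq_mul_inv _ _
          _ ≤ 9 * (((1 + x / 3) ^ 1)⁻¹) * (2 * (n:ℝ))⁻¹ := h
          _ = 9 / (2 * (n:ℝ)) * (((1 + x / 3) ^ 1)⁻¹) := by ring
      -- combine
      have hA2' : K1 lam - s * ((1 - (M:ℝ)) * K1 lam + (M:ℝ) * K2 lam) ≤ Real.exp (-x) := by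
        rw [f1]; exact f2.trans A2
      linarith
  -- integrate
  have mono1 : (∫ lam, (1 - lam) ^ (2 * n) ∂σ) ≤ ∫ lam, K1 lam ∂σ := by
    apply integral_mono_ae int0 int1
    filter_upwards [ae_mem_Ico σ hsupp] with lam hlam using (hpt lam hlam).1
  have mono2 : (∫ lam, (K1 lam - s * ((1 - (M:ℝ)) * K1 lam + (M:ℝ) * K2 lam) - r * K3 lam) ∂σ)
      ≤ ∫ lam, (1 - lam) ^ (2 * n) ∂σ := by
    apply integral_mono_ae intLow int0
    filter_upwards [ae_mem_Ico σ hsupp] with lam hlam using (hpt lam hlam).2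
  have hIeq : (∫ lam, (K1 lam - s * ((1 - (M:ℝ)) * K1 lam + (M:ℝ) * K2 lam) - r * K3 lam) ∂σ)
      = (∫ lam, K1 lam ∂σ) - s * ((1 - (M:ℝ)) * (∫ lam, K1 lam ∂σ)
          + (M:ℝ) * (∫ lam, K2 lam ∂σ)) - r * (∫ lam, K3 lam ∂σ) := by
    have h1 := integral_sub (μ := σ)
      (f := fun lam => K1 lam - s * ((1 - (M:ℝ)) * K1 lam + (M:ℝ) * K2 lam))
      (g := fun lam => r * K3 lam) (int1.sub (intMid.const_mul s)) (int3.const_mul r)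
    have h2 := integral_sub (μ := σ) (f := K1)
      (g := fun lam => s * ((1 - (M:ℝ)) * K1 lam + (M:ℝ) * K2 lam))
      int1 (intMid.const_mul s)
    have h3 := integral_const_mul (μ := σ) s (fun lam => (1 - (M:ℝ)) * K1 lam + (M:ℝ) * K2 lam)
    have h4 := integral_add (μ := σ) (f := fun lam => (1 - (M:ℝ)) * K1 lam)
      (g := fun lam => (M:ℝ) * K2 lam) (int1.const_mul _) (int2.const_mul _)
    have h5 := integral_const_mul (μ := σ) (1 - (M:ℝ)) K1
    have h6 := integral_const_mul (μ := σ) (M:ℝ) K2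
    have h7 := integral_const_mul (μ := σ) r K3
    rw [h1, h2, h3, h4, h5, h6, h7]
  have hFF1 : FF σ ω M (M:ℝ) n = (2 * n : ℝ) ^ ω * ∫ lam, K1 lam ∂σ := by
    simp only [FF, hK1def, hu1def]
  have hFF2 : FF σ ω (M - 1) (M:ℝ) n = (2 * n : ℝ) ^ ω * ∫ lam, K2 lam ∂σ := by
    simp only [FF, hK2def, hu1def]
  have hFF3 : FF σ ω 1 3 n = (2 * n : ℝ) ^ ω * ∫ lam, K3 lam ∂σ := by
    simp only [FF, hK3def, hu2def]
  constructor
  · rw [hFF1]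
    exact mul_le_mul_of_nonneg_left mono1 hrw
  · have := mul_le_mul_of_nonneg_left mono2 hrw
    rw [hIeq] at this
    calc FF σ ω M (M:ℝ) n - s * ((1 - (M:ℝ)) * FF σ ω M (M:ℝ) n
            + (M:ℝ) * FF σ ω (M - 1) (M:ℝ) n) - 9 / (2 * n) * FF σ ω 1 3 n
        = (2 * n : ℝ) ^ ω * ((∫ lam, K1 lam ∂σ) - s * ((1 - (M:ℝ)) * (∫ lam, K1 lam ∂σ)
            + (M:ℝ) * (∫ lam, K2 lam ∂σ)) - r * (∫ lam, K3 lam ∂σ)) := by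
          rw [hFF1, hFF2, hFF3, hrdef]; ring
      _ ≤ _ := this

lemma tendsto_gU {ω : ℝ} (c : ℝ) (hω : ω ∈ Set.Ioo (0:ℝ) 1) :
    Tendsto (fun M : ℕ => ((M:ℝ)) ^ ω *
        (c * Real.Gamma ((M:ℝ) - ω) * Real.Gamma ω / (Nat.factorial (M - 1)))) atTop
      (𝓝 (c * Real.Gamma ω)) := by
  have hR := (tendsto_Rr hω).comp tendsto_natCast_atTop_atTop
  have hmain := hR.const_mul (c * Real.Gamma ω)
  rw [mul_one] at hmain
  apply hmain.congr'
  filter_upwards [eventually_ge_atTop 1] with M hM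
  have hcast : ((M - 1 : ℕ) : ℝ) + 1 = (M:ℝ) := by
    rw [Nat.cast_sub hM]; push_cast; ring
  have hfact : Real.Gamma ((M:ℝ)) = (Nat.factorial (M - 1) : ℝ) := by
    rw [← hcast, Real.Gamma_nat_eq_factorial]
  simp only [Function.comp]
  rw [hfact]
  ring

lemma tendsto_sqrt_inv : Tendsto (fun M : ℕ => (Real.sqrt M)⁻¹) atTop (𝓝 0) := by
  have h : Tendsto (fun M : ℕ => Real.sqrt M) atTop atTop := by
    have he : Real.sqrt = fun x : ℝ => x ^ (1/2 : ℝ) := funext fun x => Real.sqrt_eq_rpow x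
    rw [he]
    exact (tendsto_rpow_atTop (by norm_num)).comp tendsto_natCast_atTop_atTop
  exact tendsto_inv_atTop_zero.comp h

lemma tendsto_gW {ω : ℝ} (c : ℝ) (hω : ω ∈ Set.Ioo (0:ℝ) 1) :
    Tendsto (fun M : ℕ => (Real.sqrt M)⁻¹ *
      ((1 - (M:ℝ)) * ((M:ℝ) ^ ω *
          (c * Real.Gamma ((M:ℝ) - ω) * Real.Gamma ω / (Nat.factorial (M - 1))))
        + (M:ℝ) * ((M:ℝ) ^ ω *
          (c * Real.Gamma (((M - 1 : ℕ):ℝ) - ω) * Real.Gamma ω / (Nat.factorial (M - 1 - 1))))))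
      atTop (𝓝 0) := by
  have hω0 := hω.1
  have hω1 := hω.2
  have hsub : Tendsto (fun M : ℕ => (M:ℝ) - 1) atTop atTop := by
    simpa [sub_eq_add_neg] using
      tendsto_atTop_add_const_right atTop (-1 : ℝ) tendsto_natCast_atTop_atTop
  have hRr1 : Tendsto (fun M : ℕ =>
      Real.Gamma (((M:ℝ) - 1) - ω) * ((M:ℝ) - 1) ^ ω / Real.Gamma ((M:ℝ) - 1)) atTop (𝓝 1) :=
    (tendsto_Rr hω).comp hsub
  have hq : Tendsto (fun M : ℕ => ((M:ℝ) / ((M:ℝ) - 1)) ^ ω) atTop (𝓝 1) :=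
    tendsto_rpow_of_tendsto_one ω ((tendsto_div_sub 1).comp tendsto_natCast_atTop_atTop)
  have hWlim : Tendsto (fun M : ℕ => (c * Real.Gamma ω * (1 + ω)) *
      ((Real.Gamma (((M:ℝ) - 1) - ω) * ((M:ℝ) - 1) ^ ω / Real.Gamma ((M:ℝ) - 1)) *
        (((M:ℝ) / ((M:ℝ) - 1)) ^ ω))) atTop (𝓝 (c * Real.Gamma ω * (1 + ω))) := by
    have := (hRr1.mul hq).const_mul (c * Real.Gamma ω * (1 + ω))
    simpa using this
  have hmul := tendsto_sqrt_inv.mul hWlim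
  rw [zero_mul] at hmul
  apply hmul.congr'
  filter_upwards [eventually_ge_atTop 2] with M hM2
  congr 1
  set q : ℝ := (M:ℝ) with hqdef
  have hq2 : (2:ℝ) ≤ q := by rw [hqdef]; exact_mod_cast hM2
  have hq1 : (0:ℝ) < q - 1 := by linarith
  have c1 : ((M - 1 : ℕ) : ℝ) = q - 1 := by
    rw [Nat.cast_sub (by omega : 1 ≤ M)]; push_cast; ring
  have c2' : M - 1 - 1 = M - 2 := by omega
  have c3 : ((M - 2 : ℕ) : ℝ) = q - 2 := by
    rw [Nat.cast_sub (by omega : 2 ≤ M)]; push_cast; ring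
  have f1eq : (Nat.factorial (M - 1) : ℝ) = (q - 1) * (Nat.factorial (M - 2) : ℝ) := by
    rw [show M - 1 = (M - 2) + 1 by omega, Nat.factorial_succ]
    push_cast [c3]
    ring
  have hsne : q - 1 - ω ≠ 0 := by nlinarith [hω.2]
  have Γeq : Real.Gamma (q - ω) = (q - 1 - ω) * Real.Gamma (q - 1 - ω) := by
    rw [show q - ω = (q - 1 - ω) + 1 by ring, Real.Gamma_add_one hsne]
  have Γfact : Real.Gamma (q - 1) = (Nat.factorial (M - 2) : ℝ) := by
    rw [show q - 1 = ((M - 2 : ℕ) : ℝ) + 1 by rw [c3]; ring, Real.Gamma_nat_eq_factorial]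
  have powsplit : (q - 1) ^ ω * (q / (q - 1)) ^ ω = q ^ ω := by
    rw [← Real.mul_rpow hq1.le (by positivity)]
    congr 1
    field_simp
  have hf2 : (Nat.factorial (M - 2) : ℝ) ≠ 0 := by
    exact_mod_cast (Nat.factorial_pos (M - 2)).ne'
  rw [c2', Γeq, Γfact, f1eq, c1]
  set Γs : ℝ := Real.Gamma (q - 1 - ω) with hΓs
  set f2 : ℝ := (Nat.factorial (M - 2) : ℝ) with hf2def
  have lhs_eq : c * Real.Gamma ω * (1 + ω) * ((Γs * (q - 1) ^ ω / f2) * ((q / (q - 1)) ^ ω))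
      = c * Real.Gamma ω * (1 + ω) * Γs * q ^ ω / f2 := by
    rw [show c * Real.Gamma ω * (1 + ω) * ((Γs * (q - 1) ^ ω / f2) * ((q / (q - 1)) ^ ω))
        = c * Real.Gamma ω * (1 + ω) * Γs * ((q - 1) ^ ω * (q / (q - 1)) ^ ω) / f2 by ring,
      powsplit]
  rw [lhs_eq]
  field_simp
  ring
/-- Asymptotics for gradient descent when ω ∈ (0,1):
a_k = ∫ (1-λ)^{2k} dσ(λ) ~ c Γ(ω)/(2k)^ω. -/
theorem gd_asymptotics
    (σ : Measure ℝ) [IsFiniteMeasure σ] (hsupp : σ (Set.Ico (0:ℝ) 1)ᶜ = 0)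
    (ω c : ℝ) (hω : ω ∈ Set.Ioo (0:ℝ) 1) (hc : 0 < c)
    (S : ℝ → ℝ) (hS : ∀ u : ℝ, 0 < u → S u = ∫ lam, (lam + u)⁻¹ ∂σ)
    (hderiv : ∀ k : ℕ, ω < k →
      Tendsto (fun u : ℝ =>
          iteratedDeriv (k - 1) S u /
            (c * (-1 : ℝ) ^ (k - 1) * Real.Gamma (k - ω) * Real.Gamma ω *
              u ^ (ω - k)))
        (nhdsWithin 0 (Set.Ioi 0)) (nhds 1))
    (a : ℕ → ℝ) (ha : ∀ k, a k = ∫ lam, (1 - lam) ^ (2 * k) ∂σ) :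
    Tendsto (fun k : ℕ => a k / (c * Real.Gamma ω / (2 * k) ^ ω)) atTop (nhds 1) := by
  have hω0 := hω.1
  have hΓω : 0 < Real.Gamma ω := Real.Gamma_pos_of_pos hω0
  set L : ℝ := c * Real.Gamma ω with hLdef
  have hL : 0 < L := mul_pos hc hΓω
  set Gc : ℕ → ℝ → ℝ := fun m t =>
    t ^ ω * (c * Real.Gamma ((m:ℝ) - ω) * Real.Gamma ω / (Nat.factorial (m - 1))) with hGdef
  have hFt : ∀ m : ℕ, 1 ≤ m → ∀ t : ℝ, 0 < t →
      Tendsto (FF σ ω m t) atTop (𝓝 (Gc m t)) :=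
    fun m hm t ht => tendsto_F σ hsupp ω c hω hc S hS hderiv m hm ht
  have hgU : Tendsto (fun M : ℕ => Gc M (M:ℝ)) atTop (𝓝 L) := tendsto_gU c hω
  have hW : Tendsto (fun M : ℕ => (Real.sqrt M)⁻¹ *
      ((1 - (M:ℝ)) * Gc M (M:ℝ) + (M:ℝ) * Gc (M - 1) (M:ℝ))) atTop (𝓝 0) :=
    tendsto_gW c hω
  have hgL : Tendsto (fun M : ℕ => Gc M (M:ℝ) - (Real.sqrt M)⁻¹ *
      ((1 - (M:ℝ)) * Gc M (M:ℝ) + (M:ℝ) * Gc (M - 1) (M:ℝ))) atTop (𝓝 L) := by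
    simpa using hgU.sub hW
  -- main convergence of J n = (2n)^ω * a n
  have hJ : Tendsto (fun n : ℕ => (2 * n : ℝ) ^ ω * a n) atTop (𝓝 L) := by
    rw [Metric.tendsto_atTop]
    intro ε hε
    obtain ⟨M1, hM1⟩ := Metric.tendsto_atTop.1 hgU (ε / 2) (by linarith)
    obtain ⟨M2, hM2⟩ := Metric.tendsto_atTop.1 hgL (ε / 2) (by linarith)
    set M : ℕ := max 3 (max M1 M2) with hMdef
    have hM3 : 3 ≤ M := le_max_left _ _
    have hMM1 : M1 ≤ M := le_trans (le_max_left _ _) (le_max_right _ _)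
    have hMM2 : M2 ≤ M := le_trans (le_max_right _ _) (le_max_right _ _)
    have hMpos : (0:ℝ) < (M:ℝ) := by exact_mod_cast (by omega : 0 < M)
    have e1 := hM1 M hMM1
    have e2 := hM2 M hMM2
    rw [Real.dist_eq] at e1 e2
    have tU : Tendsto (FF σ ω M (M:ℝ)) atTop (𝓝 (Gc M (M:ℝ))) :=
      hFt M (by omega) (M:ℝ) hMpos
    have tM2 : Tendsto (FF σ ω (M - 1) (M:ℝ)) atTop (𝓝 (Gc (M - 1) (M:ℝ))) :=
      hFt (M - 1) (by omega) (M:ℝ) hMpos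
    have t13 : Tendsto (FF σ ω 1 3) atTop (𝓝 (Gc 1 3)) := hFt 1 le_rfl 3 (by norm_num)
    have t9 : Tendsto (fun n : ℕ => (9:ℝ) / (2 * n)) atTop (𝓝 0) := by
      have h := tendsto_const_div_atTop_nhds_zero_nat (9 / 2 : ℝ)
      apply h.congr
      intro n
      rw [div_div]
    have tLo : Tendsto (fun n : ℕ => FF σ ω M (M:ℝ) n - (Real.sqrt M)⁻¹ *
        ((1 - (M:ℝ)) * FF σ ω M (M:ℝ) n + (M:ℝ) * FF σ ω (M - 1) (M:ℝ) n)
        - 9 / (2 * (n:ℝ)) * FF σ ω 1 3 n) atTop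
        (𝓝 (Gc M (M:ℝ) - (Real.sqrt M)⁻¹ *
          ((1 - (M:ℝ)) * Gc M (M:ℝ) + (M:ℝ) * Gc (M - 1) (M:ℝ)) - 0 * Gc 1 3)) :=
      (tU.sub (((tU.const_mul ((1:ℝ) - (M:ℝ))).add
        (tM2.const_mul ((M:ℝ)))).const_mul ((Real.sqrt (M:ℝ))⁻¹))).sub (t9.mul t13)
    rw [zero_mul, sub_zero] at tLo
    obtain ⟨N1, hN1⟩ := Metric.tendsto_atTop.1 tU (ε / 2) (by linarith)
    obtain ⟨N2, hN2⟩ := Metric.tendsto_atTop.1 tLo (ε / 2) (by linarith)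
    refine ⟨max 1 (max N1 N2), fun n hn => ?_⟩
    have hn1 : 1 ≤ n := le_trans (le_max_left _ _) hn
    have hnN1 : N1 ≤ n := le_trans (le_trans (le_max_left _ _) (le_max_right _ _)) hn
    have hnN2 : N2 ≤ n := le_trans (le_trans (le_max_right _ _) (le_max_right _ _)) hn
    have f1 := hN1 n hnN1
    have f2 := hN2 n hnN2
    rw [Real.dist_eq] at f1 f2
    obtain ⟨hup, hlow⟩ := sandwich σ hsupp ω hM3 hn1
    rw [← ha n] at hup hlow
    rw [Real.dist_eq, abs_lt]
    have e1' := abs_lt.1 e1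
    have e2' := abs_lt.1 e2
    have f1' := abs_lt.1 f1
    have f2' := abs_lt.1 f2
    constructor
    · nlinarith [f2'.1, e2'.1, hlow]
    · nlinarith [f1'.2, e1'.2, hup]
  -- conclude
  have hfinal := hJ.div_const L
  rw [div_self hL.ne'] at hfinal
  apply hfinal.congr'
  filter_upwards [eventually_ge_atTop 1] with k hk
  have hk' : (0:ℝ) < (k:ℝ) := by exact_mod_cast hk
  have hq : (0:ℝ) < (2 * k : ℝ) ^ ω := Real.rpow_pos_of_pos (by linarith) ω
  rw [div_div_eq_mul_div]
  ring
end
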